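/- arXiv:1404.3339 — 4 statements merged into one kernel-verified Lean document; each statement's English description precedes it below -/
import Mathlib

section
/- Suppose P is the Kantor pair enveloped by a 5-graded Lie algebra L. Then the Lie subalgebra ⟨T_L(P)⟩ of L generated by T_L(P) is a graded (with respect to the 5-grading) ideal of L that envelops P; moreover ⟨T_L(P)⟩ = [T_L(P), T_L(P)] ⊕ T_L(P) as modules, and [T_L(P), T_L(P)] = [L₋₁,L₋₁] ⊕ [L₋₁,L₁] ⊕ [L₁,L₁]. -/
/-- A Kantor pair over `K`: a pair of modules `(Pm, Pp)` (for `P⁻`, `P⁺`) with trilinear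
products `tm : P⁻ × P⁺ × P⁻ → P⁻` and `tp : P⁺ × P⁻ × P⁺ → P⁺` satisfying the Kantor
identities (K1) and (K2). -/
structure KantorPair (K : Type*) [CommRing K] (Pm Pp : Type*)
    [AddCommGroup Pm] [AddCommGroup Pp] [Module K Pm] [Module K Pp] where
  tm : Pm → Pp → Pm → Pm
  tp : Pp → Pm → Pp → Pp
  tm_add₁ : ∀ x x' y z, tm (x + x') y z = tm x y z + tm x' y z
  tm_smul₁ : ∀ (a : K) x y z, tm (a • x) y z = a • tm x y z
  tm_add₂ : ∀ x y y' z, tm x (y + y') z = tm x y z + tm x y' z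
  tm_smul₂ : ∀ (a : K) x y z, tm x (a • y) z = a • tm x y z
  tm_add₃ : ∀ x y z z', tm x y (z + z') = tm x y z + tm x y z'
  tm_smul₃ : ∀ (a : K) x y z, tm x y (a • z) = a • tm x y z
  tp_add₁ : ∀ x x' y z, tp (x + x') y z = tp x y z + tp x' y z
  tp_smul₁ : ∀ (a : K) x y z, tp (a • x) y z = a • tp x y z
  tp_add₂ : ∀ x y y' z, tp x (y + y') z = tp x y z + tp x y' z
  tp_smul₂ : ∀ (a : K) x y z, tp x (a • y) z = a • tp x y z
  tp_add₃ : ∀ x y z z', tp x y (z + z') = tp x y z + tp x y z'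
  tp_smul₃ : ∀ (a : K) x y z, tp x y (a • z) = a • tp x y z
  k1m : ∀ (x z u : Pm) (y w : Pp),
    tm x y (tm z w u) - tm z w (tm x y u) = tm (tm x y z) w u - tm z (tp y x w) u
  k1p : ∀ (x z u : Pp) (y w : Pm),
    tp x y (tp z w u) - tp z w (tp x y u) = tp (tp x y z) w u - tp z (tm y x w) u
  k2m : ∀ (x z u : Pm) (w v : Pp),
    (tm x (tp w u v) z - tm z (tp w u v) x) + tm u w (tm x v z - tm z v x)
      = tm (tm x w z - tm z w x) v u - tm u v (tm x w z - tm z w x)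
  k2p : ∀ (x z u : Pp) (w v : Pm),
    (tp x (tm w u v) z - tp z (tm w u v) x) + tp u w (tp x v z - tp z v x)
      = tp (tp x w z - tp z w x) v u - tp u v (tp x w z - tp z w x)

namespace KantorPair

variable {K : Type*} [CommRing K] {Pm Pp : Type*}
  [AddCommGroup Pm] [AddCommGroup Pp] [Module K Pm] [Module K Pp]

/-- `Q = (Qm, Qp)` is an ideal of the Kantor pair:
`{P,P,Q} + {P,Q,P} + {Q,P,P} ⊆ Q` on each side. -/
def IsIdealPair (KP : KantorPair K Pm Pp) (Qm : Submodule K Pm) (Qp : Submodule K Pp) : Prop :=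
  (∀ (x z : Pm) (y : Pp) (q : Pm), q ∈ Qm → KP.tm x y q ∈ Qm ∧ KP.tm q y z ∈ Qm) ∧
  (∀ (x z : Pm) (r : Pp), r ∈ Qp → KP.tm x r z ∈ Qm) ∧
  (∀ (x z : Pp) (y : Pm) (q : Pp), q ∈ Qp → KP.tp x y q ∈ Qp ∧ KP.tp q y z ∈ Qp) ∧
  (∀ (x z : Pp) (r : Pm), r ∈ Qm → KP.tp x r z ∈ Qp)

/-- A Kantor pair is simple if some product is nonzero and its only ideals are `0` and `P`. -/
def IsSimplePair (KP : KantorPair K Pm Pp) : Prop :=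
  ((∃ x y z, KP.tm x y z ≠ 0) ∨ (∃ x y z, KP.tp x y z ≠ 0)) ∧
  ∀ Qm Qp, KP.IsIdealPair Qm Qp → (Qm = ⊥ ∧ Qp = ⊥) ∨ (Qm = ⊤ ∧ Qp = ⊤)

/-- `(ωm, ωp)` belongs to the centroid of the Kantor pair. -/
def InCentroid (KP : KantorPair K Pm Pp) (ωm : Pm →ₗ[K] Pm) (ωp : Pp →ₗ[K] Pp) : Prop :=
  (∀ x y z, ωm (KP.tm x y z) = KP.tm (ωm x) y z ∧
      ωm (KP.tm x y z) = KP.tm x (ωp y) z ∧ ωm (KP.tm x y z) = KP.tm x y (ωm z)) ∧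
  (∀ x y z, ωp (KP.tp x y z) = KP.tp (ωp x) y z ∧
      ωp (KP.tp x y z) = KP.tp x (ωm y) z ∧ ωp (KP.tp x y z) = KP.tp x y (ωp z))

/-- The Kantor pair is central: `a ↦ (a • id, a • id)` is an isomorphism of `K`
onto the centroid. -/
def IsCentralPair (KP : KantorPair K Pm Pp) : Prop :=
  (∀ ωm ωp, KP.InCentroid ωm ωp →
    ∃ a : K, ωm = a • (LinearMap.id : Pm →ₗ[K] Pm) ∧ ωp = a • (LinearMap.id : Pp →ₗ[K] Pp)) ∧
  ∀ a : K, a • (LinearMap.id : Pm →ₗ[K] Pm) = 0 →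
    a • (LinearMap.id : Pp →ₗ[K] Pp) = 0 → a = 0

/-- A Jordan pair is a Kantor pair with vanishing K-operators, i.e. symmetric products. -/
def IsJordanPair (KP : KantorPair K Pm Pp) : Prop :=
  (∀ (x z : Pm) (y : Pp), KP.tm x y z = KP.tm z y x) ∧
  (∀ (x z : Pp) (y : Pm), KP.tp x y z = KP.tp z y x)

end KantorPair

/-- A 5-grading (= BC₁-grading) of a Lie algebra `L` over `K`:
an internal direct sum decomposition `L = ⊕_{i ∈ ℤ} L_i` with `⁅L_i, L_j⁆ ⊆ L_{i+j}`
and `L_i = 0` for `|i| > 2`. -/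
structure FiveGrading (K : Type*) [CommRing K] (L : Type*) [LieRing L] [LieAlgebra K L] where
  g : ℤ → Submodule K L
  internal : DirectSum.IsInternal g
  lie_mem : ∀ (i j : ℤ) (x y : L), x ∈ g i → y ∈ g j → ⁅x, y⁆ ∈ g (i + j)
  vanish : ∀ i : ℤ, 2 < |i| → g i = ⊥

/-- `T_L(P) = L_{-1} ⊕ L_1` as a submodule of `L`. -/
def Tsub {K : Type*} [CommRing K] {L : Type*} [LieRing L] [LieAlgebra K L]
    (fg : FiveGrading K L) : Submodule K L :=
  fg.g (-1) ⊔ fg.g 1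

/-- The span of all brackets `⁅x, y⁆` with `x ∈ U`, `y ∈ V`. -/
def brkSpan (K : Type*) [CommRing K] {L : Type*} [LieRing L] [LieAlgebra K L]
    (U V : Submodule K L) : Submodule K L :=
  Submodule.span K {w : L | ∃ x ∈ U, ∃ y ∈ V, w = ⁅x, y⁆}

/-- A 5-graded Lie algebra `L` tightly envelops the Kantor pair `(L_{-1}, L_1)` if it
is generated as a Lie algebra by `T = L_{-1} ⊕ L_1` and `Z(L) ∩ [T, T] = 0`. -/
def Tight (K : Type*) [CommRing K] {L : Type*} [LieRing L] [LieAlgebra K L]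
    (fg : FiveGrading K L) : Prop :=
  LieSubalgebra.lieSpan K L ↑(Tsub fg) = ⊤ ∧
  ∀ z ∈ brkSpan K (Tsub fg) (Tsub fg), (∀ u : L, ⁅z, u⁆ = 0) → z = 0

/-- A 5-graded Lie algebra `(L, fg)` envelops a Kantor pair `KP`: there are identifications
of `P⁻` with `L_{-1}` and `P⁺` with `L_1` under which the products of `KP` are the products
`⁅⁅x, y⁆, z⁆` of `L`. -/
structure Envelops {K : Type*} [CommRing K] {Pm Pp : Type*}
    [AddCommGroup Pm] [AddCommGroup Pp] [Module K Pm] [Module K Pp]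
    (KP : KantorPair K Pm Pp)
    {L : Type*} [LieRing L] [LieAlgebra K L] (fg : FiveGrading K L) where
  em : Pm →ₗ[K] L
  ep : Pp →ₗ[K] L
  inj_m : Function.Injective em
  inj_p : Function.Injective ep
  range_m : LinearMap.range em = fg.g (-1)
  range_p : LinearMap.range ep = fg.g 1
  compat_m : ∀ (x z : Pm) (y : Pp), em (KP.tm x y z) = ⁅⁅em x, ep y⁆, em z⁆
  compat_p : ∀ (x z : Pp) (y : Pm), ep (KP.tp x y z) = ⁅⁅ep x, em y⁆, ep z⁆

/-- A short Peirce grading (SP-grading) of a Kantor pair: a `ℤ`-grading with support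
contained in `{0, 1}`. -/
structure SPGrading {K : Type*} [CommRing K] {Pm Pp : Type*}
    [AddCommGroup Pm] [AddCommGroup Pp] [Module K Pm] [Module K Pp]
    (KP : KantorPair K Pm Pp) where
  Qm : ℤ → Submodule K Pm
  Qp : ℤ → Submodule K Pp
  sup_m : Qm 0 ⊔ Qm 1 = ⊤
  disj_m : Disjoint (Qm 0) (Qm 1)
  sup_p : Qp 0 ⊔ Qp 1 = ⊤
  disj_p : Disjoint (Qp 0) (Qp 1)
  vanish_m : ∀ i : ℤ, i ≠ 0 → i ≠ 1 → Qm i = ⊥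
  vanish_p : ∀ i : ℤ, i ≠ 0 → i ≠ 1 → Qp i = ⊥
  grade_m : ∀ (i j k : ℤ) (x : Pm) (y : Pp) (z : Pm),
    x ∈ Qm i → y ∈ Qp j → z ∈ Qm k → KP.tm x y z ∈ Qm (i - j + k)
  grade_p : ∀ (i j k : ℤ) (x : Pp) (y : Pm) (z : Pp),
    x ∈ Qp i → y ∈ Qm j → z ∈ Qp k → KP.tp x y z ∈ Qp (i - j + k)

/-- `KPc` is the reflection `P̌` of the SP-graded Kantor pair `(KP, SP)`:
`P̌^σ = P₀^{-σ} ⊕ P₁^σ`, with products given by the reflection formula. -/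
def IsReflection {K : Type*} [CommRing K] {Pm Pp : Type*}
    [AddCommGroup Pm] [AddCommGroup Pp] [Module K Pm] [Module K Pp]
    (KP : KantorPair K Pm Pp) (SP : SPGrading KP)
    (KPc : KantorPair K ((SP.Qp 0) × (SP.Qm 1)) ((SP.Qm 0) × (SP.Qp 1))) : Prop :=
  (∀ (a c : (SP.Qm 0) × (SP.Qp 1)) (b : (SP.Qp 0) × (SP.Qm 1)),
    ((KPc.tp a b c).1 : Pm)
      = KP.tm a.1 b.1 c.1 - KP.tm b.2 a.2 c.1 + (KP.tm a.1 c.2 b.2 - KP.tm b.2 c.2 a.1) ∧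
    ((KPc.tp a b c).2 : Pp)
      = KP.tp a.2 b.2 c.2 - KP.tp b.1 a.1 c.2 + (KP.tp a.2 c.1 b.1 - KP.tp b.1 c.1 a.2)) ∧
  (∀ (a c : (SP.Qp 0) × (SP.Qm 1)) (b : (SP.Qm 0) × (SP.Qp 1)),
    ((KPc.tm a b c).1 : Pp)
      = KP.tp a.1 b.1 c.1 - KP.tp b.2 a.2 c.1 + (KP.tp a.1 c.2 b.2 - KP.tp b.2 c.2 a.1) ∧
    ((KPc.tm a b c).2 : Pm)
      = KP.tm a.2 b.2 c.2 - KP.tm b.1 a.1 c.2 + (KP.tm a.2 c.1 b.1 - KP.tm b.1 c.1 a.2))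

/-!
The submodule `M = [T,T] + T` lies in `⟨T⟩` and contains `T`, and it is already an ideal of
`L`. Indeed, for homogeneous `x ∈ L_i` and `t ∈ L_{±1}` the bracket `[x,t] ∈ L_{i±1}` lies in
`[T,T]` when `i = ±1`, in `T` when `i ± 1 = ±1`, and vanishes in all other cases because
`L_k = 0` for `|k| > 2`; so `[L,T] ⊆ M`, and then `[x,[a,b]] = [[x,a],b] - [[x,b],a]` gives
`[L,[T,T]] ⊆ M`. Hence `⟨T⟩ = M`, and the remaining claims compare degrees: `[T,T]` lives in
degrees `-2, 0, 2` and `T` in degrees `±1`.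
-/

section BrkSpan

variable {K : Type*} [CommRing K] {L : Type*} [LieRing L] [LieAlgebra K L]

theorem lie_mem_brkSpan {U V : Submodule K L} {x y : L} (hx : x ∈ U) (hy : y ∈ V) :
    ⁅x, y⁆ ∈ brkSpan K U V :=
  Submodule.subset_span ⟨x, hx, y, hy, rfl⟩

theorem brkSpan_le {U V W : Submodule K L} (h : ∀ x ∈ U, ∀ y ∈ V, ⁅x, y⁆ ∈ W) :
    brkSpan K U V ≤ W :=
  Submodule.span_le.2 fun _ ⟨x, hx, y, hy, hw⟩ => hw ▸ h x hx y hy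

theorem brkSpan_mono {U V U' V' : Submodule K L} (hU : U ≤ U') (hV : V ≤ V') :
    brkSpan K U V ≤ brkSpan K U' V' :=
  brkSpan_le fun _ hx _ hy => lie_mem_brkSpan (hU hx) (hV hy)

theorem brkSpan_comm (U V : Submodule K L) : brkSpan K U V = brkSpan K V U := by
  have key : ∀ U V : Submodule K L, brkSpan K U V ≤ brkSpan K V U := fun U V =>
    brkSpan_le fun x hx y hy => by
      rw [← lie_skew]
      exact neg_mem (lie_mem_brkSpan hy hx)
  exact le_antisymm (key U V) (key V U)

theorem brkSpan_sup_left (U U' V : Submodule K L) :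
    brkSpan K (U ⊔ U') V = brkSpan K U V ⊔ brkSpan K U' V := by
  refine le_antisymm (brkSpan_le fun x hx y hy => ?_)
    (sup_le (brkSpan_mono le_sup_left le_rfl) (brkSpan_mono le_sup_right le_rfl))
  obtain ⟨u, hu, u', hu', rfl⟩ := Submodule.mem_sup.mp hx
  rw [add_lie]
  exact Submodule.add_mem_sup (lie_mem_brkSpan hu hy) (lie_mem_brkSpan hu' hy)

theorem brkSpan_sup_right (U V V' : Submodule K L) :
    brkSpan K U (V ⊔ V') = brkSpan K U V ⊔ brkSpan K U V' := by
  rw [brkSpan_comm, brkSpan_sup_left, brkSpan_comm V, brkSpan_comm V']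

theorem brkSpan_le_toSubmodule (A : LieSubalgebra K L) {U V : Submodule K L}
    (hU : U ≤ A.toSubmodule) (hV : V ≤ A.toSubmodule) : brkSpan K U V ≤ A.toSubmodule :=
  brkSpan_le fun _ hx _ hy => A.lie_mem (hU hx) (hV hy)

end BrkSpan

namespace FiveGrading

variable {K : Type*} [CommRing K] {L : Type*} [LieRing L] [LieAlgebra K L]
  (fg : FiveGrading K L)

theorem brkSpan_le_g (i j : ℤ) : brkSpan K (fg.g i) (fg.g j) ≤ fg.g (i + j) :=
  brkSpan_le fun x hx y hy => fg.lie_mem i j x y hx hy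

theorem disjoint_of_le_biSup {A B : Submodule K L} {s t : Set ℤ} (hst : Disjoint s t)
    (hA : A ≤ ⨆ i ∈ s, fg.g i) (hB : B ≤ ⨆ i ∈ t, fg.g i) : Disjoint A B :=
  (fg.internal.submodule_iSupIndep.disjoint_biSup_biSup hst).mono hA hB

theorem brkSpan_g_le_biSup {i j : ℤ} {s : Set ℤ} (h : i + j ∈ s) :
    brkSpan K (fg.g i) (fg.g j) ≤ ⨆ k ∈ s, fg.g k :=
  (fg.brkSpan_le_g i j).trans (le_biSup fg.g h)

theorem brkSpan_Tsub_eq : brkSpan K (Tsub fg) (Tsub fg)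
    = brkSpan K (fg.g (-1)) (fg.g (-1)) ⊔ brkSpan K (fg.g (-1)) (fg.g 1)
        ⊔ brkSpan K (fg.g 1) (fg.g 1) := by
  rw [Tsub, brkSpan_sup_left, brkSpan_sup_right, brkSpan_sup_right, brkSpan_comm (fg.g 1)]
  simp only [sup_assoc, sup_left_idem]

theorem mem_Tsub_of_mem {ε : ℤ} (hε : ε = -1 ∨ ε = 1) {x : L} (hx : x ∈ fg.g ε) :
    x ∈ Tsub fg := by
  rcases hε with rfl | rfl
  exacts [Submodule.mem_sup_left hx, Submodule.mem_sup_right hx]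

theorem lie_mem_of_mem_g {i ε : ℤ} (hε : ε = -1 ∨ ε = 1) {x y : L} (hx : x ∈ fg.g i)
    (hy : y ∈ fg.g ε) : ⁅x, y⁆ ∈ brkSpan K (Tsub fg) (Tsub fg) ⊔ Tsub fg := by
  have hxy := fg.lie_mem i ε x y hx hy
  have hdeg : (i = -1 ∨ i = 1) ∨ (i + ε = -1 ∨ i + ε = 1) ∨ 2 < |i| ∨ 2 < |i + ε| := by
    simp only [lt_abs]
    omega
  rcases hdeg with hi | hiε | hi | hiε
  · exact Submodule.mem_sup_left
      (lie_mem_brkSpan (fg.mem_Tsub_of_mem hi hx) (fg.mem_Tsub_of_mem hε hy))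
  · exact Submodule.mem_sup_right (fg.mem_Tsub_of_mem hiε hxy)
  · rw [fg.vanish i hi, Submodule.mem_bot] at hx
    rw [hx, zero_lie]
    exact zero_mem _
  · rw [fg.vanish _ hiε, Submodule.mem_bot] at hxy
    rw [hxy]
    exact zero_mem _

theorem lie_mem_of_mem_Tsub (x : L) {y : L} (hy : y ∈ Tsub fg) :
    ⁅x, y⁆ ∈ brkSpan K (Tsub fg) (Tsub fg) ⊔ Tsub fg := by
  have hx : x ∈ ⨆ i, fg.g i := fg.internal.submodule_iSup_eq_top ▸ Submodule.mem_top
  have homogeneous : ∀ ε : ℤ, ε = -1 ∨ ε = 1 → ∀ y ∈ fg.g ε,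
      ⁅x, y⁆ ∈ brkSpan K (Tsub fg) (Tsub fg) ⊔ Tsub fg := fun ε hε y hy =>
    Submodule.iSup_induction _ (motive := fun x => ⁅x, y⁆ ∈ _) hx
      (fun _ _ hz => fg.lie_mem_of_mem_g hε hz hy) (by rw [zero_lie]; exact zero_mem _)
      (fun _ _ ha hb => by rw [add_lie]; exact add_mem ha hb)
  obtain ⟨a, ha, b, hb, rfl⟩ := Submodule.mem_sup.mp hy
  rw [lie_add]
  exact add_mem (homogeneous _ (Or.inl rfl) a ha) (homogeneous _ (Or.inr rfl) b hb)

theorem lie_mem_brkSpan_sup_Tsub (x : L) {m : L}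
    (hm : m ∈ brkSpan K (Tsub fg) (Tsub fg) ⊔ Tsub fg) :
    ⁅x, m⁆ ∈ brkSpan K (Tsub fg) (Tsub fg) ⊔ Tsub fg := by
  obtain ⟨b, hb, t, ht, rfl⟩ := Submodule.mem_sup.mp hm
  rw [lie_add]
  refine add_mem ?_ (fg.lie_mem_of_mem_Tsub x ht)
  suffices brkSpan K (Tsub fg) (Tsub fg)
      ≤ (brkSpan K (Tsub fg) (Tsub fg) ⊔ Tsub fg).comap (LieModule.toEnd K L L x) from this hb
  refine brkSpan_le fun a ha c hc => ?_
  rw [Submodule.mem_comap, LieModule.toEnd_apply_apply, leibniz_lie, ← lie_skew a]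
  exact add_mem (fg.lie_mem_of_mem_Tsub _ hc) (neg_mem (fg.lie_mem_of_mem_Tsub _ ha))

theorem Tsub_le_lieSpan : Tsub fg ≤ (LieSubalgebra.lieSpan K L (Tsub fg : Set L)).toSubmodule :=
  fun _ hx => LieSubalgebra.subset_lieSpan hx

theorem lieSpan_Tsub_eq : (LieSubalgebra.lieSpan K L (Tsub fg : Set L)).toSubmodule
    = brkSpan K (Tsub fg) (Tsub fg) ⊔ Tsub fg := by
  let M : LieSubalgebra K L :=
    { toSubmodule := brkSpan K (Tsub fg) (Tsub fg) ⊔ Tsub fg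
      lie_mem' := fun _ hy => fg.lie_mem_brkSpan_sup_Tsub _ hy }
  have hM : LieSubalgebra.lieSpan K L (Tsub fg : Set L) ≤ M :=
    LieSubalgebra.lieSpan_le.2 fun _ hx => Submodule.mem_sup_right hx
  exact le_antisymm (fun _ hx => hM hx)
    (sup_le (brkSpan_le_toSubmodule _ fg.Tsub_le_lieSpan fg.Tsub_le_lieSpan) fg.Tsub_le_lieSpan)

theorem lie_mem_lieSpan_Tsub (x : L) {y : L}
    (hy : y ∈ LieSubalgebra.lieSpan K L (Tsub fg : Set L)) :
    ⁅x, y⁆ ∈ LieSubalgebra.lieSpan K L (Tsub fg : Set L) := by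
  rw [← LieSubalgebra.mem_toSubmodule, lieSpan_Tsub_eq] at hy ⊢
  exact fg.lie_mem_brkSpan_sup_Tsub x hy

theorem lieSpan_Tsub_eq_iSup_inf :
    (LieSubalgebra.lieSpan K L (Tsub fg : Set L)).toSubmodule
      = ⨆ i, fg.g i ⊓ (LieSubalgebra.lieSpan K L (Tsub fg : Set L)).toSubmodule := by
  have hN := fg.lieSpan_Tsub_eq
  set N := (LieSubalgebra.lieSpan K L (Tsub fg : Set L)).toSubmodule
  have homogeneous :
      ∀ (k : ℤ) {S : Submodule K L}, S ≤ fg.g k → S ≤ N → S ≤ ⨆ i, fg.g i ⊓ N :=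
    fun k _ hk hSN => le_iSup_of_le k (le_inf hk hSN)
  have hm : fg.g (-1) ≤ N := le_sup_left.trans fg.Tsub_le_lieSpan
  have hp : fg.g 1 ≤ N := le_sup_right.trans fg.Tsub_le_lieSpan
  refine le_antisymm ?_ (iSup_le fun _ => inf_le_right)
  calc N = brkSpan K (fg.g (-1)) (fg.g (-1)) ⊔ brkSpan K (fg.g (-1)) (fg.g 1)
        ⊔ brkSpan K (fg.g 1) (fg.g 1) ⊔ (fg.g (-1) ⊔ fg.g 1) := by
        rw [hN, brkSpan_Tsub_eq, Tsub]
    _ ≤ _ := sup_le (sup_le (sup_le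
          (homogeneous _ (fg.brkSpan_le_g _ _) (brkSpan_le_toSubmodule _ hm hm))
          (homogeneous _ (fg.brkSpan_le_g _ _) (brkSpan_le_toSubmodule _ hm hp)))
          (homogeneous _ (fg.brkSpan_le_g _ _) (brkSpan_le_toSubmodule _ hp hp)))
        (sup_le (homogeneous _ le_rfl hm) (homogeneous _ le_rfl hp))

theorem disjoint_brkSpan_Tsub_Tsub : Disjoint (brkSpan K (Tsub fg) (Tsub fg)) (Tsub fg) := by
  refine fg.disjoint_of_le_biSup (s := {-2, 0, 2}) (t := {-1, 1})
    (Set.disjoint_left.2 (by simp only [Set.mem_insert_iff, Set.mem_singleton_iff]; omega)) ?_ ?_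
  · rw [brkSpan_Tsub_eq]
    exact sup_le (sup_le (fg.brkSpan_g_le_biSup (by simp)) (fg.brkSpan_g_le_biSup (by simp)))
      (fg.brkSpan_g_le_biSup (by simp))
  · exact sup_le (le_biSup fg.g (by simp)) (le_biSup fg.g (by simp))

end FiveGrading

theorem statement1_general {K : Type*} [CommRing K]
    {L : Type*} [LieRing L] [LieAlgebra K L] (fg : FiveGrading K L) :
    -- ⟨T⟩ is an ideal of L
    (∀ x : L, ∀ y ∈ LieSubalgebra.lieSpan K L ↑(Tsub fg),
        ⁅x, y⁆ ∈ LieSubalgebra.lieSpan K L ↑(Tsub fg)) ∧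
    -- ⟨T⟩ is graded with respect to the 5-grading
    ((LieSubalgebra.lieSpan K L ↑(Tsub fg)).toSubmodule
        = ⨆ i : ℤ, fg.g i ⊓ (LieSubalgebra.lieSpan K L ↑(Tsub fg)).toSubmodule) ∧
    -- ⟨T⟩ envelops P, i.e. it contains T = L₋₁ ⊕ L₁ (with the inherited products)
    (Tsub fg ≤ (LieSubalgebra.lieSpan K L ↑(Tsub fg)).toSubmodule) ∧
    -- ⟨T⟩ = [T,T] ⊕ T as modules
    ((LieSubalgebra.lieSpan K L ↑(Tsub fg)).toSubmodule
        = brkSpan K (Tsub fg) (Tsub fg) ⊔ Tsub fg) ∧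
    Disjoint (brkSpan K (Tsub fg) (Tsub fg)) (Tsub fg) ∧
    -- [T,T] = [L₋₁,L₋₁] ⊕ [L₋₁,L₁] ⊕ [L₁,L₁]
    (brkSpan K (Tsub fg) (Tsub fg)
        = brkSpan K (fg.g (-1)) (fg.g (-1)) ⊔ brkSpan K (fg.g (-1)) (fg.g 1)
            ⊔ brkSpan K (fg.g 1) (fg.g 1)) ∧
    Disjoint (brkSpan K (fg.g (-1)) (fg.g (-1)))
      (brkSpan K (fg.g (-1)) (fg.g 1) ⊔ brkSpan K (fg.g 1) (fg.g 1)) ∧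
    Disjoint (brkSpan K (fg.g (-1)) (fg.g 1))
      (brkSpan K (fg.g (-1)) (fg.g (-1)) ⊔ brkSpan K (fg.g 1) (fg.g 1)) := by
  refine ⟨fun x _ hy => fg.lie_mem_lieSpan_Tsub x hy, fg.lieSpan_Tsub_eq_iSup_inf,
    fg.Tsub_le_lieSpan, fg.lieSpan_Tsub_eq, fg.disjoint_brkSpan_Tsub_Tsub, fg.brkSpan_Tsub_eq,
    ?_, ?_⟩
  · refine fg.disjoint_of_le_biSup (s := {-2}) (t := {0, 2}) (by simp)
      (fg.brkSpan_g_le_biSup (by simp)) ?_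
    exact sup_le (fg.brkSpan_g_le_biSup (by simp)) (fg.brkSpan_g_le_biSup (by simp))
  · refine fg.disjoint_of_le_biSup (s := {0}) (t := {-2, 2}) (by simp)
      (fg.brkSpan_g_le_biSup (by simp)) ?_
    exact sup_le (fg.brkSpan_g_le_biSup (by simp)) (fg.brkSpan_g_le_biSup (by simp))

/-- If `P` is the Kantor pair enveloped by a 5-graded Lie algebra `L`,
then the Lie subalgebra generated by `T = T_L(P) = L₋₁ ⊕ L₁` is a graded ideal of `L`
enveloping `P`; it equals `[T,T] ⊕ T` as modules, and
`[T,T] = [L₋₁,L₋₁] ⊕ [L₋₁,L₁] ⊕ [L₁,L₁]`. -/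
theorem statement1 {K : Type*} [CommRing K] (h6 : IsUnit (6 : K))
    {L : Type*} [LieRing L] [LieAlgebra K L] (fg : FiveGrading K L) :
    -- ⟨T⟩ is an ideal of L
    (∀ x : L, ∀ y ∈ LieSubalgebra.lieSpan K L ↑(Tsub fg),
        ⁅x, y⁆ ∈ LieSubalgebra.lieSpan K L ↑(Tsub fg)) ∧
    -- ⟨T⟩ is graded with respect to the 5-grading
    ((LieSubalgebra.lieSpan K L ↑(Tsub fg)).toSubmodule
        = ⨆ i : ℤ, fg.g i ⊓ (LieSubalgebra.lieSpan K L ↑(Tsub fg)).toSubmodule) ∧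
    -- ⟨T⟩ envelops P, i.e. it contains T = L₋₁ ⊕ L₁ (with the inherited products)
    (Tsub fg ≤ (LieSubalgebra.lieSpan K L ↑(Tsub fg)).toSubmodule) ∧
    -- ⟨T⟩ = [T,T] ⊕ T as modules
    ((LieSubalgebra.lieSpan K L ↑(Tsub fg)).toSubmodule
        = brkSpan K (Tsub fg) (Tsub fg) ⊔ Tsub fg) ∧
    Disjoint (brkSpan K (Tsub fg) (Tsub fg)) (Tsub fg) ∧
    -- [T,T] = [L₋₁,L₋₁] ⊕ [L₋₁,L₁] ⊕ [L₁,L₁]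
    (brkSpan K (Tsub fg) (Tsub fg)
        = brkSpan K (fg.g (-1)) (fg.g (-1)) ⊔ brkSpan K (fg.g (-1)) (fg.g 1)
            ⊔ brkSpan K (fg.g 1) (fg.g 1)) ∧
    Disjoint (brkSpan K (fg.g (-1)) (fg.g (-1)))
      (brkSpan K (fg.g (-1)) (fg.g 1) ⊔ brkSpan K (fg.g 1) (fg.g 1)) ∧
    Disjoint (brkSpan K (fg.g (-1)) (fg.g 1))
      (brkSpan K (fg.g (-1)) (fg.g (-1)) ⊔ brkSpan K (fg.g 1) (fg.g 1)) :=
  statement1_general fg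
end

section
/- Suppose P is a simple Kantor pair over 𝕂. Then C(𝔎(P), ℤ) = C(𝔎(P)); the restriction map χ ↦ (χ|_{P⁻}, χ|_{P⁺}) is an algebra isomorphism of C(𝔎(P)) onto C(P); and consequently P is central if and only if the Lie algebra 𝔎(P) is central. -/
/-- The centroid `C(L)` of a Lie algebra. -/
def LieCentroid (K : Type*) [CommRing K] (L : Type*) [LieRing L] [LieAlgebra K L] :
    Set (Module.End K L) :=
  {χ | ∀ x y : L, χ ⁅x, y⁆ = ⁅χ x, y⁆}

/-- `ω = (ω⁻, ω⁺)` is the restriction of `χ` to `(P⁻, P⁺)` under the identifications. -/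
def RestrRel {K : Type*} [CommRing K] {Pm Pp : Type*}
    [AddCommGroup Pm] [AddCommGroup Pp] [Module K Pm] [Module K Pp]
    {KP : KantorPair K Pm Pp} {L : Type*} [LieRing L] [LieAlgebra K L]
    {fg : FiveGrading K L} (E : Envelops KP fg)
    (χ : Module.End K L) (ω : (Pm →ₗ[K] Pm) × (Pp →ₗ[K] Pp)) : Prop :=
  (∀ x : Pm, χ (E.em x) = E.em (ω.1 x)) ∧ (∀ y : Pp, χ (E.ep y) = E.ep (ω.2 y))

theorem LinearMap.exists_comp_eq_of_surjective_of_ker_le {R M N P : Type*} [Ring R]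
    [AddCommGroup M] [AddCommGroup N] [AddCommGroup P] [Module R M] [Module R N] [Module R P]
    {f : M →ₗ[R] N} {g : M →ₗ[R] P} (hf : Function.Surjective f)
    (h : LinearMap.ker f ≤ LinearMap.ker g) : ∃ φ : N →ₗ[R] P, φ ∘ₗ f = g :=
  ⟨(LinearMap.ker f).liftQ g h ∘ₗ (f.quotKerEquivOfSurjective hf).symm.toLinearMap, by
    ext m
    simp⟩

theorem LinearMap.exists_comp_eq_of_injective_of_range_le {R M N P : Type*} [Ring R]
    [AddCommGroup M] [AddCommGroup N] [AddCommGroup P] [Module R M] [Module R N] [Module R P]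
    {f : M →ₗ[R] N} {g : P →ₗ[R] N} (hf : Function.Injective f)
    (h : LinearMap.range g ≤ LinearMap.range f) : ∃ φ : P →ₗ[R] M, f ∘ₗ φ = g :=
  ⟨(LinearEquiv.ofInjective f hf).symm.toLinearMap ∘ₗ g.codRestrict _ fun p => h ⟨p, rfl⟩, by
    ext p
    simp [← LinearEquiv.ofInjective_apply (h := hf)]⟩

namespace LieCentroid

variable {K L : Type*} [CommRing K] [LieRing L] [LieAlgebra K L] {S : Set L}

theorem map_lie_right {χ : Module.End K L} (hχ : χ ∈ LieCentroid K L) (x y : L) :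
    χ ⁅x, y⁆ = ⁅x, χ y⁆ := by
  rw [← lie_skew, map_neg, hχ, lie_skew]

theorem smul_one_mem (a : K) : a • (1 : Module.End K L) ∈ LieCentroid K L := by
  intro x y
  simp

theorem ext_of_lieSpan_eq_top (hS : LieSubalgebra.lieSpan K L S = ⊤) {χ χ' : Module.End K L}
    (hχ : χ ∈ LieCentroid K L) (hχ' : χ' ∈ LieCentroid K L) (h : ∀ s ∈ S, χ s = χ' s) :
    χ = χ' := by
  ext x
  have hx : x ∈ LieSubalgebra.lieSpan K L S := hS ▸ trivial
  induction hx using LieSubalgebra.lieSpan_induction with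
  | mem s hs => exact h s hs
  | zero => simp
  | add x y _ _ hx hy => rw [map_add, map_add, hx, hy]
  | smul a x _ hx => rw [map_smul, map_smul, hx]
  | lie x y _ _ hx _ => rw [hχ, hχ', hx]

theorem mem_of_lieSpan_eq_top (hS : LieSubalgebra.lieSpan K L S = ⊤) {χ : Module.End K L}
    (h : ∀ s ∈ S, ∀ x, χ ⁅s, x⁆ = ⁅s, χ x⁆) : χ ∈ LieCentroid K L := by
  have hcomm : ∀ y x : L, χ ⁅y, x⁆ = ⁅y, χ x⁆ := by
    intro y
    have hy : y ∈ LieSubalgebra.lieSpan K L S := hS ▸ trivial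
    induction hy using LieSubalgebra.lieSpan_induction with
    | mem s hs => exact h s hs
    | zero => simp
    | add y z _ _ hy hz => intro x; rw [add_lie, map_add, hy, hz, add_lie]
    | smul a y _ hy => intro x; rw [smul_lie, map_smul, hy, smul_lie]
    | lie y z _ _ hy hz => intro x; rw [lie_lie, map_sub, hy, hz, hz, hy, lie_lie]
  intro x y
  rw [← lie_skew, map_neg, hcomm, lie_skew]

end LieCentroid

namespace LieSubalgebra

variable {K L : Type*} [CommRing K] [LieRing L] [LieAlgebra K L] {S : Set L}

theorem lie_eq_zero_of_lieSpan_eq_top (hS : lieSpan K L S = ⊤) {z : L}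
    (h : ∀ s ∈ S, ⁅z, s⁆ = 0) (x : L) : ⁅z, x⁆ = 0 := by
  have hx : x ∈ lieSpan K L S := hS ▸ trivial
  induction hx using lieSpan_induction with
  | mem s hs => exact h s hs
  | zero => simp
  | add x y _ _ hx hy => rw [lie_add, hx, hy, add_zero]
  | smul a x _ hx => rw [lie_smul, hx, smul_zero]
  | lie x y _ _ hx hy => rw [leibniz_lie, hx, hy, zero_lie, lie_zero, add_zero]

theorem eq_top_of_lie_mem (hS : lieSpan K L S = ⊤) {N : Submodule K L} (hSN : S ⊆ N)
    (hN : ∀ s ∈ S, ∀ n ∈ N, ⁅s, n⁆ ∈ N) : N = ⊤ := by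
  have hideal : ∀ x : L, ∀ n ∈ N, ⁅x, n⁆ ∈ N := by
    intro x
    have hx : x ∈ lieSpan K L S := hS ▸ trivial
    induction hx using lieSpan_induction with
    | mem s hs => exact hN s hs
    | zero => simp
    | add x y _ _ hx hy => intro n hn; rw [add_lie]; exact add_mem (hx n hn) (hy n hn)
    | smul a x _ hx => intro n hn; rw [smul_lie]; exact N.smul_mem a (hx n hn)
    | lie x y _ _ hx hy =>
      intro n hn; rw [lie_lie]; exact sub_mem (hx _ (hy n hn)) (hy _ (hx n hn))
  let N' : LieSubalgebra K L := { N with lie_mem' := fun {x _} _ hy => hideal x _ hy }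
  have hle : lieSpan K L S ≤ N' := lieSpan_le.mpr hSN
  rw [hS] at hle
  exact eq_top_iff.mpr fun x _ => hle trivial

end LieSubalgebra

namespace FiveGrading

variable {K L : Type*} [CommRing K] [LieRing L] [LieAlgebra K L] (fg : FiveGrading K L)

noncomputable def proj (i : ℤ) : Module.End K L :=
  letI := fg.internal.chooseDecomposition
  (fg.g i).subtype ∘ₗ DirectSum.component K ℤ (fun j => fg.g j) i ∘ₗ
    (DirectSum.decomposeLinearEquiv fg.g).toLinearMap

theorem proj_mem (i : ℤ) (x : L) : fg.proj i x ∈ fg.g i := by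
  simp [proj]

theorem proj_of_mem {i : ℤ} {x : L} (hx : x ∈ fg.g i) : fg.proj i x = x :=
  let _ := fg.internal.chooseDecomposition
  DirectSum.decompose_of_mem_same fg.g hx

theorem proj_of_mem_of_ne {i j : ℤ} {x : L} (hx : x ∈ fg.g i) (h : i ≠ j) :
    fg.proj j x = 0 :=
  let _ := fg.internal.chooseDecomposition
  DirectSum.decompose_of_mem_ne fg.g hx h

theorem eq_zero_of_two_lt_abs {i : ℤ} (h : 2 < |i|) {x : L} (hx : x ∈ fg.g i) : x = 0 := by
  rwa [fg.vanish i h, Submodule.mem_bot] at hx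

theorem eq_zero_of_notMem_Icc {i : ℤ} (h : i ∉ Finset.Icc (-2 : ℤ) 2) {x : L}
    (hx : x ∈ fg.g i) : x = 0 :=
  fg.eq_zero_of_two_lt_abs (by rw [Finset.mem_Icc] at h; rw [lt_abs]; omega) hx

theorem induction_on {p : L → Prop} (x : L) (mem : ∀ i, ∀ x ∈ fg.g i, p x) (zero : p 0)
    (add : ∀ x y, p x → p y → p (x + y)) : p x :=
  Submodule.iSup_induction fg.g (motive := p)
    (fg.internal.submodule_iSup_eq_top ▸ Submodule.mem_top) mem zero add

theorem sum_proj (x : L) : ∑ i ∈ Finset.Icc (-2 : ℤ) 2, fg.proj i x = x := by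
  induction x using fg.induction_on with
  | mem i x hx =>
    by_cases hi : i ∈ Finset.Icc (-2 : ℤ) 2
    · rw [Finset.sum_eq_single i (fun j _ hj => fg.proj_of_mem_of_ne hx (Ne.symm hj))
        (absurd hi), fg.proj_of_mem hx]
    · simp [fg.eq_zero_of_notMem_Icc hi hx]
  | zero => simp
  | add x y hx hy => simp only [map_add, Finset.sum_add_distrib, hx, hy]

theorem proj_lie_of_mem_right {j : ℤ} {y : L} (hy : y ∈ fg.g j) (i : ℤ) (x : L) :
    fg.proj (i + j) ⁅x, y⁆ = ⁅fg.proj i x, y⁆ := by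
  induction x using fg.induction_on with
  | mem k x hx =>
    by_cases hki : k = i
    · subst hki
      rw [fg.proj_of_mem hx, fg.proj_of_mem (fg.lie_mem k j x y hx hy)]
    · rw [fg.proj_of_mem_of_ne hx hki, fg.proj_of_mem_of_ne (fg.lie_mem k j x y hx hy)
        (by omega), zero_lie]
  | zero => simp
  | add x x' hx hx' => rw [add_lie, map_add, hx, hx', map_add, add_lie]

theorem eq_zero_of_mem_Tsub {t : L} (ht : t ∈ Tsub fg) (hm : fg.proj (-1) t = 0)
    (hp : fg.proj 1 t = 0) : t = 0 := by
  obtain ⟨a, ha, b, hb, rfl⟩ := Submodule.mem_sup.mp ht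
  rw [map_add, fg.proj_of_mem ha, fg.proj_of_mem_of_ne hb (by norm_num), add_zero] at hm
  rw [map_add, fg.proj_of_mem_of_ne ha (by norm_num), fg.proj_of_mem hb, zero_add] at hp
  rw [hm, hp, add_zero]

theorem proj_lie_eq_zero_of_mem_Tsub {k : ℤ} (hk : Odd k) {a b : L} (ha : a ∈ Tsub fg)
    (hb : b ∈ Tsub fg) : fg.proj k ⁅a, b⁆ = 0 := by
  obtain ⟨r, rfl⟩ := hk
  obtain ⟨a₁, ha₁, a₂, ha₂, rfl⟩ := Submodule.mem_sup.mp ha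
  obtain ⟨b₁, hb₁, b₂, hb₂, rfl⟩ := Submodule.mem_sup.mp hb
  have hne : ∀ {i j : ℤ} {x y : L}, x ∈ fg.g i → y ∈ fg.g j → i + j ≠ 2 * r + 1 →
      fg.proj (2 * r + 1) ⁅x, y⁆ = 0 :=
    fun hx hy h => fg.proj_of_mem_of_ne (fg.lie_mem _ _ _ _ hx hy) h
  simp only [add_lie, lie_add, map_add, hne ha₁ hb₁ (by omega), hne ha₁ hb₂ (by omega),
    hne ha₂ hb₁ (by omega), hne ha₂ hb₂ (by omega), add_zero]

theorem proj_eq_zero_of_mem_brkSpan {k : ℤ} (hk : Odd k) {c : L}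
    (hc : c ∈ brkSpan K (Tsub fg) (Tsub fg)) : fg.proj k c = 0 := by
  induction hc using Submodule.span_induction with
  | mem w hw =>
    obtain ⟨a, ha, b, hb, rfl⟩ := hw
    exact fg.proj_lie_eq_zero_of_mem_Tsub hk ha hb
  | zero => simp
  | add x y _ _ hx hy => rw [map_add, hx, hy, add_zero]
  | smul a x _ hx => rw [map_smul, hx, smul_zero]

theorem disjoint_Tsub_brkSpan : Disjoint (Tsub fg) (brkSpan K (Tsub fg) (Tsub fg)) :=
  Submodule.disjoint_def.mpr fun _ ht hc => fg.eq_zero_of_mem_Tsub ht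
    (fg.proj_eq_zero_of_mem_brkSpan (by decide) hc) (fg.proj_eq_zero_of_mem_brkSpan (by decide) hc)

theorem lie_lie_mem_Tsub {s a b : L} (hs : s ∈ Tsub fg) (ha : a ∈ Tsub fg)
    (hb : b ∈ Tsub fg) : ⁅s, ⁅a, b⁆⁆ ∈ Tsub fg := by
  have hodd : ∀ {i j k : ℤ} {x y z : L}, x ∈ fg.g i → y ∈ fg.g j → z ∈ fg.g k →
      (i = -1 ∨ i = 1) → (j = -1 ∨ j = 1) → (k = -1 ∨ k = 1) → ⁅x, ⁅y, z⁆⁆ ∈ Tsub fg := by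
    intro i j k x y z hx hy hz hi hj hk
    have hxyz := fg.lie_mem _ _ _ _ hx (fg.lie_mem _ _ _ _ hy hz)
    rcases (show i + (j + k) = -1 ∨ i + (j + k) = 1 ∨ 2 < |i + (j + k)| by rw [lt_abs]; omega)
      with h | h | h
    · exact Submodule.mem_sup_left (h ▸ hxyz)
    · exact Submodule.mem_sup_right (h ▸ hxyz)
    · rw [fg.eq_zero_of_two_lt_abs h hxyz]
      exact zero_mem _
  obtain ⟨s₁, hs₁, s₂, hs₂, rfl⟩ := Submodule.mem_sup.mp hs
  obtain ⟨a₁, ha₁, a₂, ha₂, rfl⟩ := Submodule.mem_sup.mp ha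
  obtain ⟨b₁, hb₁, b₂, hb₂, rfl⟩ := Submodule.mem_sup.mp hb
  simp only [add_lie, lie_add]
  repeat' apply add_mem
  all_goals exact hodd ‹_› ‹_› ‹_› (by norm_num) (by norm_num) (by norm_num)

theorem eq_zero_of_injective_of_shift {f : Module.End K L} (hf : Function.Injective f) {d : ℤ}
    (hd : d ≠ 0) (hshift : ∀ i, ∀ x ∈ fg.g i, f x ∈ fg.g (i + d)) (x : L) : x = 0 := by
  induction x using fg.induction_on with
  | mem i x hx =>
    have hiter : ∀ n : ℕ, f^[n] x ∈ fg.g (i + n * d) := by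
      intro n
      induction n with
      | zero => simpa using hx
      | succ n ih =>
        rw [Function.iterate_succ_apply']
        convert hshift _ _ ih using 2
        push_cast
        ring
    by_cases hi : 2 < |i|
    · exact fg.eq_zero_of_two_lt_abs hi hx
    · -- `f^[5]` moves every degree in `[-2, 2]` out of the support of the grading.
      refine hf.iterate 5 ?_
      rw [fg.eq_zero_of_two_lt_abs ?_ (hiter 5), iterate_map_zero]
      rw [not_lt, abs_le] at hi
      rw [lt_abs]
      omega
  | zero => rfl
  | add x y hx hy => rw [hx, hy, add_zero]

noncomputable def degreeComponent (χ : Module.End K L) (d : ℤ) : Module.End K L :=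
  ∑ k ∈ Finset.Icc (-2 : ℤ) 2, fg.proj (k + d) ∘ₗ χ ∘ₗ fg.proj k

variable {fg}

theorem degreeComponent_apply_of_mem (χ : Module.End K L) (d : ℤ) {i : ℤ} {x : L}
    (hx : x ∈ fg.g i) : fg.degreeComponent χ d x = fg.proj (i + d) (χ x) := by
  by_cases hi : i ∈ Finset.Icc (-2 : ℤ) 2
  · rw [degreeComponent, LinearMap.sum_apply, Finset.sum_eq_single i _ (absurd hi)]
    · simp [fg.proj_of_mem hx]
    · intro k _ hk
      simp [fg.proj_of_mem_of_ne hx (Ne.symm hk)]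
  · simp [fg.eq_zero_of_notMem_Icc hi hx]

theorem degreeComponent_mem (χ : Module.End K L) (d : ℤ) {i : ℤ} {x : L} (hx : x ∈ fg.g i) :
    fg.degreeComponent χ d x ∈ fg.g (i + d) := by
  rw [degreeComponent_apply_of_mem χ d hx]
  exact fg.proj_mem _ _

theorem degreeComponent_proj (χ : Module.End K L) (d j : ℤ) (x : L) :
    fg.degreeComponent χ d (fg.proj j x) = fg.proj (j + d) (fg.degreeComponent χ d x) := by
  induction x using fg.induction_on with
  | mem i x hx =>
    by_cases hij : i = j
    · subst hij
      rw [fg.proj_of_mem hx, fg.proj_of_mem (degreeComponent_mem χ d hx)]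
    · rw [fg.proj_of_mem_of_ne hx hij, map_zero,
        fg.proj_of_mem_of_ne (degreeComponent_mem χ d hx) (by omega)]
  | zero => simp
  | add x y hx hy => simp only [map_add, hx, hy]

theorem degreeComponent_mem_lieCentroid {χ : Module.End K L} (hχ : χ ∈ LieCentroid K L)
    (d : ℤ) : fg.degreeComponent χ d ∈ LieCentroid K L := by
  intro x y
  induction x using fg.induction_on with
  | mem i x hx =>
    induction y using fg.induction_on with
    | mem j y hy =>
      rw [degreeComponent_apply_of_mem χ d (fg.lie_mem i j x y hx hy), hχ, add_right_comm,
        fg.proj_lie_of_mem_right hy, degreeComponent_apply_of_mem χ d hx]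
    | zero => simp
    | add y y' hy hy' => rw [lie_add, map_add, hy, hy', lie_add]
  | zero => simp
  | add x x' hx hx' => rw [add_lie, map_add, hx, hx', map_add, add_lie]

end FiveGrading

namespace Tight

variable {K L : Type*} [CommRing K] [LieRing L] [LieAlgebra K L] {fg : FiveGrading K L}
  (ht : Tight K fg)
include ht

theorem eq_zero_of_lie_eq_zero {z : L} (hz : z ∈ brkSpan K (Tsub fg) (Tsub fg))
    (h : ∀ t ∈ Tsub fg, ⁅t, z⁆ = 0) : z = 0 :=
  ht.2 z hz <| LieSubalgebra.lie_eq_zero_of_lieSpan_eq_top ht.1 fun t htT => by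
    rw [← lie_skew, h t htT, neg_zero]

theorem sup_brkSpan_eq_top : Tsub fg ⊔ brkSpan K (Tsub fg) (Tsub fg) = ⊤ := by
  refine LieSubalgebra.eq_top_of_lie_mem ht.1 (fun t htT => Submodule.mem_sup_left htT) ?_
  intro s hs n hn
  obtain ⟨t, htT, c, hc, rfl⟩ := Submodule.mem_sup.mp hn
  clear hn
  have hsc : ⁅s, c⁆ ∈ Tsub fg := by
    induction hc using Submodule.span_induction with
    | mem w hw =>
      obtain ⟨a, ha, b, hb, rfl⟩ := hw
      exact fg.lie_lie_mem_Tsub hs ha hb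
    | zero => simp
    | add x y _ _ hx hy => rw [lie_add]; exact add_mem hx hy
    | smul a x _ hx => rw [lie_smul]; exact Submodule.smul_mem _ a hx
  rw [lie_add]
  exact add_mem (Submodule.mem_sup_right (Submodule.subset_span ⟨s, hs, t, htT, rfl⟩))
    (Submodule.mem_sup_left hsc)

theorem mem_brkSpan_of_mem_even {k : ℤ} (hk : Even k) {x : L} (hx : x ∈ fg.g k) :
    x ∈ brkSpan K (Tsub fg) (Tsub fg) := by
  have hx' : x ∈ Tsub fg ⊔ brkSpan K (Tsub fg) (Tsub fg) := by
    rw [ht.sup_brkSpan_eq_top]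
    trivial
  obtain ⟨t, htT, c, hc, rfl⟩ := Submodule.mem_sup.mp hx'
  obtain ⟨r, rfl⟩ := hk
  have hodd : ∀ j, j = -1 ∨ j = 1 → fg.proj j t = 0 := by
    rintro j hj
    have := fg.proj_of_mem_of_ne hx (j := j) (by omega)
    rwa [map_add, fg.proj_eq_zero_of_mem_brkSpan (by rcases hj with rfl | rfl <;> decide) hc,
      add_zero] at this
  rwa [fg.eq_zero_of_mem_Tsub htT (hodd _ (.inl rfl)) (hodd _ (.inr rfl)), zero_add]

end Tight

namespace KantorPair

variable {K : Type*} [CommRing K] {Pm Pp : Type*} [AddCommGroup Pm] [AddCommGroup Pp]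
  [Module K Pm] [Module K Pp] (KP : KantorPair K Pm Pp)

/-- The triple product of `P⁻ ⊕ P⁺` that becomes `⁅⁅a, b⁆, c⁆` in an envelope. -/
def tri (a b c : Pm × Pp) : Pm × Pp :=
  (KP.tm a.1 b.2 c.1 - KP.tm b.1 a.2 c.1 + (KP.tm a.1 c.2 b.1 - KP.tm b.1 c.2 a.1),
    KP.tp a.2 b.1 c.2 - KP.tp b.2 a.1 c.2 + (KP.tp a.2 c.1 b.2 - KP.tp b.2 c.1 a.2))

namespace InCentroid

variable {KP} {ωm : Pm →ₗ[K] Pm} {ωp : Pp →ₗ[K] Pp} (hω : KP.InCentroid ωm ωp)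
include hω

theorem tm_left (x : Pm) (y : Pp) (z : Pm) : KP.tm (ωm x) y z = ωm (KP.tm x y z) :=
  (hω.1 x y z).1.symm

theorem tm_middle (x : Pm) (y : Pp) (z : Pm) : KP.tm x (ωp y) z = ωm (KP.tm x y z) :=
  (hω.1 x y z).2.1.symm

theorem tm_right (x : Pm) (y : Pp) (z : Pm) : KP.tm x y (ωm z) = ωm (KP.tm x y z) :=
  (hω.1 x y z).2.2.symm

theorem tp_left (x : Pp) (y : Pm) (z : Pp) : KP.tp (ωp x) y z = ωp (KP.tp x y z) :=
  (hω.2 x y z).1.symm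

theorem tp_middle (x : Pp) (y : Pm) (z : Pp) : KP.tp x (ωm y) z = ωp (KP.tp x y z) :=
  (hω.2 x y z).2.1.symm

theorem tp_right (x : Pp) (y : Pm) (z : Pp) : KP.tp x y (ωp z) = ωp (KP.tp x y z) :=
  (hω.2 x y z).2.2.symm

theorem tri_map_left (a b c : Pm × Pp) :
    KP.tri (ωm.prodMap ωp a) b c = ωm.prodMap ωp (KP.tri a b c) := by
  simp only [tri, LinearMap.prodMap_apply, hω.tm_left, hω.tm_middle, hω.tm_right, hω.tp_left,
    hω.tp_middle, hω.tp_right, map_add, map_sub]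

theorem tri_map_middle (a b c : Pm × Pp) :
    KP.tri a (ωm.prodMap ωp b) c = ωm.prodMap ωp (KP.tri a b c) := by
  simp only [tri, LinearMap.prodMap_apply, hω.tm_left, hω.tm_middle, hω.tm_right, hω.tp_left,
    hω.tp_middle, hω.tp_right, map_add, map_sub]

end InCentroid

end KantorPair

namespace Envelops

variable {K : Type*} [CommRing K] {Pm Pp : Type*} [AddCommGroup Pm] [AddCommGroup Pp]
  [Module K Pm] [Module K Pp] {KP : KantorPair K Pm Pp} {L : Type*} [LieRing L]
  [LieAlgebra K L] {fg : FiveGrading K L} (E : Envelops KP fg)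

theorem em_mem (x : Pm) : E.em x ∈ fg.g (-1) := E.range_m ▸ LinearMap.mem_range_self _ x

theorem ep_mem (y : Pp) : E.ep y ∈ fg.g 1 := E.range_p ▸ LinearMap.mem_range_self _ y

def incl : Pm × Pp →ₗ[K] L := E.em.coprod E.ep

theorem incl_apply (v : Pm × Pp) : E.incl v = E.em v.1 + E.ep v.2 := rfl

theorem range_incl : LinearMap.range E.incl = Tsub fg := by
  rw [incl, LinearMap.range_coprod, E.range_m, E.range_p, Tsub]

theorem incl_mem_Tsub (v : Pm × Pp) : E.incl v ∈ Tsub fg :=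
  E.range_incl ▸ LinearMap.mem_range_self _ v

theorem proj_neg_one_incl (v : Pm × Pp) : fg.proj (-1) (E.incl v) = E.em v.1 := by
  rw [incl_apply, map_add, fg.proj_of_mem (E.em_mem _), fg.proj_of_mem_of_ne (E.ep_mem _)
    (by norm_num), add_zero]

theorem proj_one_incl (v : Pm × Pp) : fg.proj 1 (E.incl v) = E.ep v.2 := by
  rw [incl_apply, map_add, fg.proj_of_mem_of_ne (E.em_mem _) (by norm_num),
    fg.proj_of_mem (E.ep_mem _), zero_add]

theorem lie_lie_em_em_em (x x' x'' : Pm) : ⁅⁅E.em x, E.em x'⁆, E.em x''⁆ = 0 :=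
  fg.eq_zero_of_two_lt_abs (i := -1 + -1 + -1) (by norm_num)
    (fg.lie_mem _ _ _ _ (fg.lie_mem _ _ _ _ (E.em_mem x) (E.em_mem x')) (E.em_mem x''))

theorem lie_lie_ep_ep_ep (y y' y'' : Pp) : ⁅⁅E.ep y, E.ep y'⁆, E.ep y''⁆ = 0 :=
  fg.eq_zero_of_two_lt_abs (i := 1 + 1 + 1) (by norm_num)
    (fg.lie_mem _ _ _ _ (fg.lie_mem _ _ _ _ (E.ep_mem y) (E.ep_mem y')) (E.ep_mem y''))

theorem lie_lie_em_ep_ep (x : Pm) (y y' : Pp) :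
    ⁅⁅E.em x, E.ep y⁆, E.ep y'⁆ = -E.ep (KP.tp y x y') := by
  rw [← lie_skew (E.em x), neg_lie, ← E.compat_p]

theorem lie_lie_ep_em_em (y : Pp) (x x' : Pm) :
    ⁅⁅E.ep y, E.em x⁆, E.em x'⁆ = -E.em (KP.tm x y x') := by
  rw [← lie_skew (E.ep y), neg_lie, ← E.compat_m]

theorem lie_lie_em_em_ep (x x' : Pm) (y : Pp) :
    ⁅⁅E.em x, E.em x'⁆, E.ep y⁆ = E.em (KP.tm x y x') - E.em (KP.tm x' y x) := by
  rw [lie_lie, ← lie_skew (E.em x) ⁅E.em x', E.ep y⁆, ← lie_skew (E.em x') ⁅E.em x, E.ep y⁆,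
    ← E.compat_m, ← E.compat_m]
  abel

theorem lie_lie_ep_ep_em (y y' : Pp) (x : Pm) :
    ⁅⁅E.ep y, E.ep y'⁆, E.em x⁆ = E.ep (KP.tp y x y') - E.ep (KP.tp y' x y) := by
  rw [lie_lie, ← lie_skew (E.ep y) ⁅E.ep y', E.em x⁆, ← lie_skew (E.ep y') ⁅E.ep y, E.em x⁆,
    ← E.compat_p, ← E.compat_p]
  abel

theorem lie_lie_incl (a b c : Pm × Pp) :
    ⁅⁅E.incl a, E.incl b⁆, E.incl c⁆ = E.incl (KP.tri a b c) := by
  simp only [incl_apply, KantorPair.tri, add_lie, lie_add, map_add, map_sub, lie_lie_em_em_em,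
    lie_lie_ep_ep_ep, lie_lie_em_ep_ep, lie_lie_ep_em_em, lie_lie_em_em_ep, lie_lie_ep_ep_em,
    ← E.compat_m, ← E.compat_p]
  abel

theorem exists_incl_eq {t : L} (ht : t ∈ Tsub fg) : ∃ v, E.incl v = t := by
  rwa [← E.range_incl] at ht

theorem incl_injective : Function.Injective E.incl := by
  refine injective_iff_map_eq_zero _ |>.mpr fun v hv => ?_
  have hm : E.em v.1 = 0 := by rw [← E.proj_neg_one_incl, hv, map_zero]
  have hp : E.ep v.2 = 0 := by rw [← E.proj_one_incl, hv, map_zero]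
  exact Prod.ext ((map_eq_zero_iff _ E.inj_m).mp hm) ((map_eq_zero_iff _ E.inj_p).mp hp)

include E in
theorem nontrivial (hs : KP.IsSimplePair) : Nontrivial L := by
  rcases hs.1 with ⟨x, y, z, h⟩ | ⟨x, y, z, h⟩
  · exact ⟨_, _, (map_ne_zero_iff _ E.inj_m).mpr h⟩
  · exact ⟨_, _, (map_ne_zero_iff _ E.inj_p).mpr h⟩

theorem isIdealPair_comap {I : Submodule K L} (hI : ∀ x y : L, y ∈ I → ⁅x, y⁆ ∈ I) :
    KP.IsIdealPair (I.comap E.em) (I.comap E.ep) := by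
  have hI' : ∀ x y, x ∈ I → ⁅x, y⁆ ∈ I := fun x y hx => by
    rw [← lie_skew]
    exact neg_mem (hI y x hx)
  refine ⟨fun x z y q hq => ⟨?_, ?_⟩, fun x z r hr => ?_, fun x z y q hq => ⟨?_, ?_⟩,
    fun x z r hr => ?_⟩ <;> simp only [Submodule.mem_comap, E.compat_m, E.compat_p] at *
  · exact hI _ _ hq
  · exact hI' _ _ (hI' _ _ hq)
  · exact hI' _ _ (hI _ _ hr)
  · exact hI _ _ hq
  · exact hI' _ _ (hI' _ _ hq)
  · exact hI' _ _ (hI _ _ hr)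

theorem eq_bot_of_comap_eq_bot (ht : Tight K fg) {I : Submodule K L}
    (hI : ∀ x y : L, y ∈ I → ⁅x, y⁆ ∈ I) (hgr : ∀ j, ∀ x ∈ I, fg.proj j x ∈ I)
    (hm : I.comap E.em = ⊥) (hp : I.comap E.ep = ⊥) : I = ⊥ := by
  have hodd : ∀ k, Odd k → ∀ x ∈ I, x ∈ fg.g k → x = 0 := by
    intro k hk x hxI hx
    obtain ⟨r, rfl⟩ := hk
    rcases (show 2 * r + 1 = -1 ∨ 2 * r + 1 = 1 ∨ 2 < |2 * r + 1| by rw [lt_abs]; omega)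
      with h | h | h
    · rw [h, ← E.range_m] at hx
      obtain ⟨u, rfl⟩ := hx
      rw [show u = 0 from (Submodule.mem_bot K).mp (hm ▸ hxI), map_zero]
    · rw [h, ← E.range_p] at hx
      obtain ⟨u, rfl⟩ := hx
      rw [show u = 0 from (Submodule.mem_bot K).mp (hp ▸ hxI), map_zero]
    · exact fg.eq_zero_of_two_lt_abs h hx
  have heven : ∀ k, Even k → ∀ x ∈ I, x ∈ fg.g k → x = 0 := by
    intro k hk x hxI hx
    refine ht.eq_zero_of_lie_eq_zero (ht.mem_brkSpan_of_mem_even hk hx) fun t htT => ?_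
    obtain ⟨r, rfl⟩ := hk
    obtain ⟨a, ha, b, hb, rfl⟩ := Submodule.mem_sup.mp htT
    rw [add_lie, hodd _ ⟨r - 1, by ring⟩ _ (hI a x hxI) (fg.lie_mem _ _ _ _ ha hx),
      hodd _ ⟨r, by ring⟩ _ (hI b x hxI) (fg.lie_mem _ _ _ _ hb hx), add_zero]
  rw [eq_bot_iff]
  intro x hx
  rw [Submodule.mem_bot, ← fg.sum_proj x]
  refine Finset.sum_eq_zero fun j _ => ?_
  rcases Int.even_or_odd j with hj | hj
  · exact heven j hj _ (hgr j x hx) (fg.proj_mem j x)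
  · exact hodd j hj _ (hgr j x hx) (fg.proj_mem j x)

theorem eq_top_of_comap_eq_top (ht : Tight K fg) {I : Submodule K L}
    (hI : ∀ x y : L, y ∈ I → ⁅x, y⁆ ∈ I) (hm : I.comap E.em = ⊤) (hp : I.comap E.ep = ⊤) :
    I = ⊤ := by
  refine LieSubalgebra.eq_top_of_lie_mem ht.1 (fun t htT => ?_) fun _ _ n hn => hI _ n hn
  obtain ⟨v, rfl⟩ := E.exists_incl_eq htT
  exact add_mem (show v.1 ∈ I.comap E.em from hm ▸ trivial)
    (show v.2 ∈ I.comap E.ep from hp ▸ trivial)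

include E in
theorem eq_bot_or_eq_top_of_graded (hs : KP.IsSimplePair) (ht : Tight K fg)
    {I : Submodule K L} (hI : ∀ x y : L, y ∈ I → ⁅x, y⁆ ∈ I)
    (hgr : ∀ j, ∀ x ∈ I, fg.proj j x ∈ I) : I = ⊥ ∨ I = ⊤ :=
  (hs.2 _ _ (E.isIdealPair_comap hI)).imp (fun h => E.eq_bot_of_comap_eq_bot ht hI hgr h.1 h.2)
    fun h => E.eq_top_of_comap_eq_top ht hI h.1 h.2

include E in
theorem degreeComponent_eq_zero (hs : KP.IsSimplePair) (ht : Tight K fg)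
    {χ : Module.End K L} (hχ : χ ∈ LieCentroid K L) {d : ℤ} (hd : d ≠ 0) :
    fg.degreeComponent χ d = 0 := by
  have hχd := FiveGrading.degreeComponent_mem_lieCentroid (fg := fg) hχ d
  rcases E.eq_bot_or_eq_top_of_graded hs ht (I := LinearMap.ker (fg.degreeComponent χ d))
    (fun x y hy => by rw [LinearMap.mem_ker, LieCentroid.map_lie_right hχd, hy, lie_zero])
    (fun j x hx => by rw [LinearMap.mem_ker, FiveGrading.degreeComponent_proj, hx, map_zero])
    with h | h
  · have := E.nontrivial hs
    obtain ⟨x, hx⟩ := exists_ne (0 : L)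
    exact absurd (fg.eq_zero_of_injective_of_shift (LinearMap.ker_eq_bot.mp h) hd
      (fun i x hx => FiveGrading.degreeComponent_mem χ d hx) x) hx
  · exact LinearMap.ker_eq_top.mp h

include E in
theorem mem_of_mem_lieCentroid (hs : KP.IsSimplePair) (ht : Tight K fg)
    {χ : Module.End K L} (hχ : χ ∈ LieCentroid K L) {i : ℤ} {x : L} (hx : x ∈ fg.g i) :
    χ x ∈ fg.g i := by
  have hcomp : ∀ j ≠ i, fg.proj j (χ x) = 0 := by
    intro j hj
    rw [← add_sub_cancel i j, ← FiveGrading.degreeComponent_apply_of_mem χ _ hx,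
      E.degreeComponent_eq_zero hs ht hχ (sub_ne_zero.mpr hj), LinearMap.zero_apply]
  rw [← fg.sum_proj (χ x), Finset.sum_eq_single i (fun j _ => hcomp j)
    fun hi => fg.eq_zero_of_notMem_Icc hi (fg.proj_mem i _)]
  exact fg.proj_mem i _

end Envelops

namespace RestrRel

variable {K : Type*} [CommRing K] {Pm Pp : Type*} [AddCommGroup Pm] [AddCommGroup Pp]
  [Module K Pm] [Module K Pp] {KP : KantorPair K Pm Pp} {L : Type*} [LieRing L]
  [LieAlgebra K L] {fg : FiveGrading K L} {E : Envelops KP fg} {χ χ' : Module.End K L}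
  {ω ω' : (Pm →ₗ[K] Pm) × (Pp →ₗ[K] Pp)}

theorem one (E : Envelops KP fg) : RestrRel E 1 (LinearMap.id, LinearMap.id) :=
  ⟨fun _ => rfl, fun _ => rfl⟩

theorem zero (E : Envelops KP fg) : RestrRel E 0 (0, 0) :=
  ⟨fun _ => by simp, fun _ => by simp⟩

theorem mul (h : RestrRel E χ ω) (h' : RestrRel E χ' ω') :
    RestrRel E (χ * χ') (ω.1 ∘ₗ ω'.1, ω.2 ∘ₗ ω'.2) :=
  ⟨fun x => by simp [h.1, h'.1], fun y => by simp [h.2, h'.2]⟩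

theorem add (h : RestrRel E χ ω) (h' : RestrRel E χ' ω') :
    RestrRel E (χ + χ') (ω.1 + ω'.1, ω.2 + ω'.2) :=
  ⟨fun x => by simp [h.1, h'.1], fun y => by simp [h.2, h'.2]⟩

theorem smul (h : RestrRel E χ ω) (a : K) : RestrRel E (a • χ) (a • ω.1, a • ω.2) :=
  ⟨fun x => by simp [h.1], fun y => by simp [h.2]⟩

theorem unique (h : RestrRel E χ ω) (h' : RestrRel E χ ω') : ω = ω' :=
  Prod.ext (LinearMap.ext fun x => E.inj_m ((h.1 x).symm.trans (h'.1 x)))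
    (LinearMap.ext fun y => E.inj_p ((h.2 y).symm.trans (h'.2 y)))

theorem apply_incl (h : RestrRel E χ ω) (v : Pm × Pp) :
    χ (E.incl v) = E.incl (ω.1.prodMap ω.2 v) := by
  simp [Envelops.incl_apply, h.1, h.2]

theorem inCentroid (h : RestrRel E χ ω) (hχ : χ ∈ LieCentroid K L) :
    KP.InCentroid ω.1 ω.2 := by
  have hχ' := LieCentroid.map_lie_right hχ
  refine ⟨fun x y z => ⟨E.inj_m ?_, E.inj_m ?_, E.inj_m ?_⟩,
    fun x y z => ⟨E.inj_p ?_, E.inj_p ?_, E.inj_p ?_⟩⟩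
  · rw [← h.1, E.compat_m, E.compat_m, hχ, hχ, h.1]
  · rw [← h.1, E.compat_m, E.compat_m, hχ, hχ', h.2]
  · rw [← h.1, E.compat_m, E.compat_m, hχ', h.1]
  · rw [← h.2, E.compat_p, E.compat_p, hχ, hχ, h.2]
  · rw [← h.2, E.compat_p, E.compat_p, hχ, hχ', h.1]
  · rw [← h.2, E.compat_p, E.compat_p, hχ', h.2]

theorem eq_of_mem_lieCentroid (ht : Tight K fg) (h : RestrRel E χ ω) (h' : RestrRel E χ' ω)
    (hχ : χ ∈ LieCentroid K L) (hχ' : χ' ∈ LieCentroid K L) : χ = χ' := by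
  refine LieCentroid.ext_of_lieSpan_eq_top ht.1 hχ hχ' fun t htT => ?_
  obtain ⟨v, rfl⟩ := E.exists_incl_eq htT
  rw [h.apply_incl, h'.apply_incl]

end RestrRel

namespace Envelops

variable {K : Type*} [CommRing K] {Pm Pp : Type*} [AddCommGroup Pm] [AddCommGroup Pp]
  [Module K Pm] [Module K Pp] {KP : KantorPair K Pm Pp} {L : Type*} [LieRing L]
  [LieAlgebra K L] {fg : FiveGrading K L} (E : Envelops KP fg)

theorem exists_restrRel (hs : KP.IsSimplePair) (ht : Tight K fg) {χ : Module.End K L}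
    (hχ : χ ∈ LieCentroid K L) : ∃ ω, RestrRel E χ ω := by
  obtain ⟨ωm, hωm⟩ := LinearMap.exists_comp_eq_of_injective_of_range_le E.inj_m
    (g := χ ∘ₗ E.em) <| by
      rintro _ ⟨x, rfl⟩
      rw [E.range_m]
      exact E.mem_of_mem_lieCentroid hs ht hχ (E.em_mem x)
  obtain ⟨ωp, hωp⟩ := LinearMap.exists_comp_eq_of_injective_of_range_le E.inj_p
    (g := χ ∘ₗ E.ep) <| by
      rintro _ ⟨y, rfl⟩
      rw [E.range_p]
      exact E.mem_of_mem_lieCentroid hs ht hχ (E.ep_mem y)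
  exact ⟨(ωm, ωp), fun x => (LinearMap.congr_fun hωm x).symm,
    fun y => (LinearMap.congr_fun hωp y).symm⟩

theorem existsUnique_restrRel (hs : KP.IsSimplePair) (ht : Tight K fg) {χ : Module.End K L}
    (hχ : χ ∈ LieCentroid K L) : ∃! ω, KP.InCentroid ω.1 ω.2 ∧ RestrRel E χ ω := by
  obtain ⟨ω, hω⟩ := E.exists_restrRel hs ht hχ
  exact ⟨ω, ⟨hω.inCentroid hχ, hω⟩, fun ω' h' => h'.2.unique hω⟩

noncomputable def brkComb (ω : Module.End K (Pm × Pp)) :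
    ((Pm × Pp) × (Pm × Pp) →₀ K) →ₗ[K] L :=
  Finsupp.linearCombination K fun p => ⁅E.incl (ω p.1), E.incl p.2⁆

/-- `E.spanMap LinearMap.id` parametrizes `L = T + [T, T]`; the extension of `ω ∈ C(P)` is the
`χ` with `χ ∘ E.spanMap LinearMap.id = E.spanMap (ωm.prodMap ωp)`. -/
noncomputable def spanMap (ω : Module.End K (Pm × Pp)) :
    (Pm × Pp) × ((Pm × Pp) × (Pm × Pp) →₀ K) →ₗ[K] L :=
  (E.incl ∘ₗ ω).coprod (E.brkComb ω)

theorem spanMap_apply (ω : Module.End K (Pm × Pp)) (v : Pm × Pp)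
    (c : (Pm × Pp) × (Pm × Pp) →₀ K) :
    E.spanMap ω (v, c) = E.incl (ω v) + E.brkComb ω c := rfl

theorem brkComb_single (ω : Module.End K (Pm × Pp)) (p : (Pm × Pp) × (Pm × Pp)) (r : K) :
    E.brkComb ω (Finsupp.single p r) = r • ⁅E.incl (ω p.1), E.incl p.2⁆ :=
  Finsupp.linearCombination_single K r p

theorem range_brkComb_le (ω : Module.End K (Pm × Pp)) :
    LinearMap.range (E.brkComb ω) ≤ brkSpan K (Tsub fg) (Tsub fg) := by
  rw [brkComb, Finsupp.range_linearCombination]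
  exact Submodule.span_mono <| by
    rintro _ ⟨p, rfl⟩
    exact ⟨_, E.incl_mem_Tsub _, _, E.incl_mem_Tsub _, rfl⟩

theorem range_brkComb_id :
    LinearMap.range (E.brkComb LinearMap.id) = brkSpan K (Tsub fg) (Tsub fg) := by
  refine le_antisymm (E.range_brkComb_le _) (Submodule.span_le.mpr ?_)
  rintro _ ⟨a, ha, b, hb, rfl⟩
  obtain ⟨u, rfl⟩ := E.exists_incl_eq ha
  obtain ⟨v, rfl⟩ := E.exists_incl_eq hb
  exact ⟨Finsupp.single (u, v) 1, by rw [brkComb_single, one_smul]; rfl⟩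

theorem spanMap_id_surjective (ht : Tight K fg) :
    Function.Surjective (E.spanMap LinearMap.id) := by
  rw [← LinearMap.range_eq_top, spanMap, LinearMap.range_coprod, LinearMap.comp_id,
    E.range_incl, E.range_brkComb_id, ht.sup_brkSpan_eq_top]

variable {ωm : Pm →ₗ[K] Pm} {ωp : Pp →ₗ[K] Pp}

theorem exists_lie_incl_brkComb (hω : KP.InCentroid ωm ωp) (u : Pm × Pp)
    (c : (Pm × Pp) × (Pm × Pp) →₀ K) :
    ∃ w, ⁅E.incl u, E.brkComb LinearMap.id c⁆ = E.incl w ∧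
      ⁅E.incl u, E.brkComb (ωm.prodMap ωp) c⁆ = E.incl (ωm.prodMap ωp w) := by
  induction c using Finsupp.induction_linear with
  | zero => exact ⟨0, by simp only [map_zero, lie_zero], by simp only [map_zero, lie_zero]⟩
  | add c c' hc hc' =>
    obtain ⟨w, hw, hw'⟩ := hc
    obtain ⟨w', hw2, hw2'⟩ := hc'
    exact ⟨w + w', by rw [map_add, lie_add, hw, hw2, map_add],
      by rw [map_add, lie_add, hw', hw2', map_add, map_add]⟩
  | single p r =>
    refine ⟨r • -KP.tri p.1 p.2 u, ?_, ?_⟩ <;>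
    rw [brkComb_single, lie_smul, ← lie_skew, lie_lie_incl, map_smul, map_neg]
    · rfl
    · rw [hω.tri_map_left, map_smul, map_neg]

theorem lie_incl_map_comm (ht : Tight K fg) (hω : KP.InCentroid ωm ωp) (u v : Pm × Pp) :
    ⁅E.incl (ωm.prodMap ωp u), E.incl v⁆ = ⁅E.incl u, E.incl (ωm.prodMap ωp v)⁆ := by
  rw [← sub_eq_zero]
  refine ht.eq_zero_of_lie_eq_zero (sub_mem ?_ ?_) fun t htT => ?_
  · exact Submodule.subset_span ⟨_, E.incl_mem_Tsub _, _, E.incl_mem_Tsub _, rfl⟩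
  · exact Submodule.subset_span ⟨_, E.incl_mem_Tsub _, _, E.incl_mem_Tsub _, rfl⟩
  obtain ⟨w, rfl⟩ := E.exists_incl_eq htT
  rw [← lie_skew, sub_lie, lie_lie_incl, lie_lie_incl, hω.tri_map_left, hω.tri_map_middle,
    sub_self, neg_zero]

theorem ker_spanMap_le (ht : Tight K fg) (hω : KP.InCentroid ωm ωp) :
    LinearMap.ker (E.spanMap LinearMap.id) ≤ LinearMap.ker (E.spanMap (ωm.prodMap ωp)) := by
  rintro ⟨v, c⟩ h
  rw [LinearMap.mem_ker, spanMap_apply, LinearMap.id_apply] at h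
  have hv : v = 0 := by
    refine E.incl_injective ?_
    rw [map_zero]
    refine Submodule.disjoint_def.mp fg.disjoint_Tsub_brkSpan _ (E.incl_mem_Tsub v) ?_
    rw [eq_neg_of_add_eq_zero_left h]
    exact neg_mem (E.range_brkComb_le _ ⟨c, rfl⟩)
  rw [hv, map_zero, zero_add] at h
  rw [LinearMap.mem_ker, spanMap_apply, hv, map_zero, map_zero, zero_add]
  refine ht.eq_zero_of_lie_eq_zero (E.range_brkComb_le _ ⟨c, rfl⟩) fun t htT => ?_
  obtain ⟨u, rfl⟩ := E.exists_incl_eq htT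
  obtain ⟨w, hw, hw'⟩ := E.exists_lie_incl_brkComb hω u c
  rw [h, lie_zero, eq_comm, map_eq_zero_iff _ E.incl_injective] at hw
  rw [hw', hw, map_zero, map_zero]

theorem exists_mem_lieCentroid_restrRel (ht : Tight K fg) (hω : KP.InCentroid ωm ωp) :
    ∃ χ ∈ LieCentroid K L, RestrRel E χ (ωm, ωp) := by
  obtain ⟨χ, hχ⟩ := LinearMap.exists_comp_eq_of_surjective_of_ker_le
    (E.spanMap_id_surjective ht) (E.ker_spanMap_le ht hω)
  have hincl : ∀ v, χ (E.incl v) = E.incl (ωm.prodMap ωp v) := fun v => by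
    simpa [spanMap_apply] using LinearMap.congr_fun hχ (v, 0)
  have hbrk : ∀ c, χ (E.brkComb LinearMap.id c) = E.brkComb (ωm.prodMap ωp) c := fun c => by
    simpa only [LinearMap.comp_apply, spanMap_apply, map_zero, zero_add]
      using LinearMap.congr_fun hχ (0, c)
  refine ⟨χ, LieCentroid.mem_of_lieSpan_eq_top ht.1 fun s hs x => ?_,
    fun x => by simpa [incl_apply] using hincl (x, 0),
    fun y => by simpa [incl_apply] using hincl (0, y)⟩
  obtain ⟨u, rfl⟩ := E.exists_incl_eq hs
  obtain ⟨⟨v, c⟩, rfl⟩ := E.spanMap_id_surjective ht x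
  obtain ⟨w, hw, hw'⟩ := E.exists_lie_incl_brkComb hω u c
  have huv : ⁅E.incl u, E.incl v⁆ = E.brkComb LinearMap.id (Finsupp.single (u, v) 1) := by
    rw [brkComb_single, one_smul]
    rfl
  rw [← LinearMap.comp_apply, hχ, spanMap_apply, spanMap_apply, LinearMap.id_apply, lie_add,
    lie_add, map_add, huv, hbrk, hw, hincl, hw', brkComb_single, one_smul,
    lie_incl_map_comm E ht hω]

theorem existsUnique_lieCentroid_restrRel (ht : Tight K fg)
    {ω : (Pm →ₗ[K] Pm) × (Pp →ₗ[K] Pp)} (hω : KP.InCentroid ω.1 ω.2) :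
    ∃! χ, χ ∈ LieCentroid K L ∧ RestrRel E χ ω := by
  obtain ⟨χ, hχ, h⟩ := E.exists_mem_lieCentroid_restrRel ht hω
  exact ⟨χ, ⟨hχ, h⟩, fun χ' h' => h'.2.eq_of_mem_lieCentroid ht h h'.1 hχ⟩

include E in
theorem isCentralPair_iff (hs : KP.IsSimplePair) (ht : Tight K fg) :
    KP.IsCentralPair ↔ ((∀ χ ∈ LieCentroid K L, ∃ a : K, χ = a • (1 : Module.End K L)) ∧
      ∀ a : K, a • (1 : Module.End K L) = 0 → a = 0) := by
  have hsmul (a : K) : RestrRel E (a • 1) (a • LinearMap.id, a • LinearMap.id) :=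
    (RestrRel.one E).smul a
  constructor
  · rintro ⟨hcent, hinj⟩
    refine ⟨fun χ hχ => ?_, fun a ha => ?_⟩
    · obtain ⟨ω, hω⟩ := E.exists_restrRel hs ht hχ
      obtain ⟨a, h₁, h₂⟩ := hcent ω.1 ω.2 (hω.inCentroid hχ)
      refine ⟨a, hω.eq_of_mem_lieCentroid ht ?_ hχ (LieCentroid.smul_one_mem a)⟩
      rw [show ω = (a • LinearMap.id, a • LinearMap.id) from Prod.ext h₁ h₂]
      exact hsmul a
    · have h := (ha ▸ hsmul a).unique (RestrRel.zero E)
      exact hinj a (congrArg Prod.fst h) (congrArg Prod.snd h)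
  · rintro ⟨hcent, hinj⟩
    refine ⟨fun ωm ωp hω => ?_, fun a hm hp => hinj a ?_⟩
    · obtain ⟨χ, hχ, h⟩ := E.exists_mem_lieCentroid_restrRel ht hω
      obtain ⟨a, rfl⟩ := hcent χ hχ
      have h' := h.unique (hsmul a)
      exact ⟨a, congrArg Prod.fst h', congrArg Prod.snd h'⟩
    · refine (hsmul a).eq_of_mem_lieCentroid ht ?_ (LieCentroid.smul_one_mem a)
        (by simpa using LieCentroid.smul_one_mem (L := L) (0 : K))
      rw [hm, hp]
      exact RestrRel.zero E

end Envelops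

/-- `𝔎(P)` is represented by an arbitrary 5-graded Lie algebra `L` tightly enveloping `P`. -/
theorem statement3_general {K : Type*} [CommRing K]
    {Pm Pp : Type*} [AddCommGroup Pm] [AddCommGroup Pp] [Module K Pm] [Module K Pp]
    (KP : KantorPair K Pm Pp) (hsimple : KP.IsSimplePair)
    {L : Type*} [LieRing L] [LieAlgebra K L] (fg : FiveGrading K L)
    (E : Envelops KP fg) (ht : Tight K fg) :
    -- C(𝔎(P), ℤ) = C(𝔎(P)) : every centroid element is graded
    (∀ χ ∈ LieCentroid K L, ∀ (i : ℤ) (x : L), x ∈ fg.g i → χ x ∈ fg.g i) ∧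
    -- restriction is a bijection from C(𝔎(P)) onto C(P) ...
    (∀ χ ∈ LieCentroid K L, ∃! ω : (Pm →ₗ[K] Pm) × (Pp →ₗ[K] Pp),
        KP.InCentroid ω.1 ω.2 ∧ RestrRel E χ ω) ∧
    (∀ ω : (Pm →ₗ[K] Pm) × (Pp →ₗ[K] Pp), KP.InCentroid ω.1 ω.2 →
        ∃! χ : Module.End K L, χ ∈ LieCentroid K L ∧ RestrRel E χ ω) ∧
    -- ... which is an algebra map
    RestrRel E 1 (LinearMap.id, LinearMap.id) ∧
    (∀ (χ χ' : Module.End K L) (ω ω' : (Pm →ₗ[K] Pm) × (Pp →ₗ[K] Pp)),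
      RestrRel E χ ω → RestrRel E χ' ω' →
        RestrRel E (χ * χ') (ω.1 ∘ₗ ω'.1, ω.2 ∘ₗ ω'.2) ∧
        RestrRel E (χ + χ') (ω.1 + ω'.1, ω.2 + ω'.2)) ∧
    (∀ (a : K) (χ : Module.End K L) (ω : (Pm →ₗ[K] Pm) × (Pp →ₗ[K] Pp)),
      RestrRel E χ ω → RestrRel E (a • χ) (a • ω.1, a • ω.2)) ∧
    -- P is central iff 𝔎(P) is central
    (KP.IsCentralPair ↔
      ((∀ χ ∈ LieCentroid K L, ∃ a : K, χ = a • (1 : Module.End K L)) ∧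
        ∀ a : K, a • (1 : Module.End K L) = 0 → a = 0)) := by
  refine ⟨fun χ hχ i x hx => E.mem_of_mem_lieCentroid hsimple ht hχ hx,
    fun χ hχ => E.existsUnique_restrRel hsimple ht hχ,
    fun ω hω => E.existsUnique_lieCentroid_restrRel ht hω, RestrRel.one E,
    fun χ χ' ω ω' h h' => ⟨h.mul h', h.add h'⟩, fun a χ ω h => h.smul a,
    E.isCentralPair_iff hsimple ht⟩

/-- Let `P` be a simple Kantor pair.  Then every centroid element of
`𝔎(P)` preserves the 5-grading (`C(𝔎(P),ℤ) = C(𝔎(P))`), the restriction map is an algebra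
isomorphism of `C(𝔎(P))` onto `C(P)`, and `P` is central iff `𝔎(P)` is central.
(`𝔎(P)` is represented by an arbitrary 5-graded Lie algebra `L` tightly enveloping `P`.) -/
theorem statement3 {K : Type*} [CommRing K] (h6 : IsUnit (6 : K))
    {Pm Pp : Type*} [AddCommGroup Pm] [AddCommGroup Pp] [Module K Pm] [Module K Pp]
    (KP : KantorPair K Pm Pp) (hsimple : KP.IsSimplePair)
    {L : Type*} [LieRing L] [LieAlgebra K L] (fg : FiveGrading K L)
    (E : Envelops KP fg) (ht : Tight K fg) :
    -- C(𝔎(P), ℤ) = C(𝔎(P)) : every centroid element is graded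
    (∀ χ ∈ LieCentroid K L, ∀ (i : ℤ) (x : L), x ∈ fg.g i → χ x ∈ fg.g i) ∧
    -- restriction is a bijection from C(𝔎(P)) onto C(P) ...
    (∀ χ ∈ LieCentroid K L, ∃! ω : (Pm →ₗ[K] Pm) × (Pp →ₗ[K] Pp),
        KP.InCentroid ω.1 ω.2 ∧ RestrRel E χ ω) ∧
    (∀ ω : (Pm →ₗ[K] Pm) × (Pp →ₗ[K] Pp), KP.InCentroid ω.1 ω.2 →
        ∃! χ : Module.End K L, χ ∈ LieCentroid K L ∧ RestrRel E χ ω) ∧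
    -- ... which is an algebra map
    RestrRel E 1 (LinearMap.id, LinearMap.id) ∧
    (∀ (χ χ' : Module.End K L) (ω ω' : (Pm →ₗ[K] Pm) × (Pp →ₗ[K] Pp)),
      RestrRel E χ ω → RestrRel E χ' ω' →
        RestrRel E (χ * χ') (ω.1 ∘ₗ ω'.1, ω.2 ∘ₗ ω'.2) ∧
        RestrRel E (χ + χ') (ω.1 + ω'.1, ω.2 + ω'.2)) ∧
    (∀ (a : K) (χ : Module.End K L) (ω : (Pm →ₗ[K] Pm) × (Pp →ₗ[K] Pp)),
      RestrRel E χ ω → RestrRel E (a • χ) (a • ω.1, a • ω.2)) ∧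
    -- P is central iff 𝔎(P) is central
    (KP.IsCentralPair ↔
      ((∀ χ ∈ LieCentroid K L, ∃ a : K, χ = a • (1 : Module.End K L)) ∧
        ∀ a : K, a • (1 : Module.End K L) = 0 → a = 0)) :=
  statement3_general KP hsimple fg E ht
end

section
/- If P is a simple Kantor pair over 𝕂, then the centroid C(P) is a field, and P, viewed as a pair of C(P)-modules via the centroid action with the same trilinear products, is a central simple Kantor pair over the field C(P). -/
namespace KantorPair

variable {K : Type*} [CommRing K] {Pm Pp : Type*}
  [AddCommGroup Pm] [AddCommGroup Pp] [Module K Pm] [Module K Pp] (KP : KantorPair K Pm Pp)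

theorem tm_zero₁ (y : Pp) (z : Pm) : KP.tm 0 y z = 0 := by
  simpa using KP.tm_smul₁ 0 0 y z

theorem tm_zero₂ (x z : Pm) : KP.tm x 0 z = 0 := by
  simpa using KP.tm_smul₂ 0 x 0 z

theorem tm_zero₃ (x : Pm) (y : Pp) : KP.tm x y 0 = 0 := by
  simpa using KP.tm_smul₃ 0 x y 0

theorem tp_zero₁ (y : Pm) (z : Pp) : KP.tp 0 y z = 0 := by
  simpa using KP.tp_smul₁ 0 0 y z

theorem tp_zero₂ (x z : Pp) : KP.tp x 0 z = 0 := by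
  simpa using KP.tp_smul₂ 0 x 0 z

theorem tp_zero₃ (x : Pp) (y : Pm) : KP.tp x y 0 = 0 := by
  simpa using KP.tp_smul₃ 0 x y 0

def spanTm : Submodule K Pm := Submodule.span K {w | ∃ x y z, KP.tm x y z = w}

def spanTp : Submodule K Pp := Submodule.span K {w | ∃ x y z, KP.tp x y z = w}

theorem tm_mem_spanTm (x : Pm) (y : Pp) (z : Pm) : KP.tm x y z ∈ KP.spanTm :=
  Submodule.subset_span ⟨x, y, z, rfl⟩

theorem tp_mem_spanTp (x : Pp) (y : Pm) (z : Pp) : KP.tp x y z ∈ KP.spanTp :=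
  Submodule.subset_span ⟨x, y, z, rfl⟩

theorem isIdealPair_spanTm_spanTp : KP.IsIdealPair KP.spanTm KP.spanTp :=
  ⟨fun _ _ _ _ _ => ⟨KP.tm_mem_spanTm _ _ _, KP.tm_mem_spanTm _ _ _⟩,
    fun _ _ _ _ => KP.tm_mem_spanTm _ _ _,
    fun _ _ _ _ _ => ⟨KP.tp_mem_spanTp _ _ _, KP.tp_mem_spanTp _ _ _⟩,
    fun _ _ _ _ => KP.tp_mem_spanTp _ _ _⟩

variable {KP}

theorem IsSimplePair.spanTm_eq_top_and_spanTp_eq_top (hKP : KP.IsSimplePair) :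
    KP.spanTm = ⊤ ∧ KP.spanTp = ⊤ := by
  refine (hKP.2 _ _ KP.isIdealPair_spanTm_spanTp).resolve_left ?_
  rintro ⟨hm, hp⟩
  rcases hKP.1 with ⟨x, y, z, hne⟩ | ⟨x, y, z, hne⟩
  · exact hne <| (Submodule.eq_bot_iff _).mp hm _ (KP.tm_mem_spanTm x y z)
  · exact hne <| (Submodule.eq_bot_iff _).mp hp _ (KP.tp_mem_spanTp x y z)

theorem IsSimplePair.id_ne_zero (hKP : KP.IsSimplePair) :
    ¬((LinearMap.id : Pm →ₗ[K] Pm) = 0 ∧ (LinearMap.id : Pp →ₗ[K] Pp) = 0) := by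
  rintro ⟨hm, hp⟩
  rcases hKP.1 with ⟨x, y, z, hne⟩ | ⟨x, y, z, hne⟩
  · exact hne (LinearMap.congr_fun hm _)
  · exact hne (LinearMap.congr_fun hp _)

theorem inCentroid_id : KP.InCentroid LinearMap.id LinearMap.id :=
  ⟨fun _ _ _ => ⟨rfl, rfl, rfl⟩, fun _ _ _ => ⟨rfl, rfl, rfl⟩⟩

namespace InCentroid

variable {ωm ωm' : Pm →ₗ[K] Pm} {ωp ωp' : Pp →ₗ[K] Pp}

theorem add (h : KP.InCentroid ωm ωp) (h' : KP.InCentroid ωm' ωp') :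
    KP.InCentroid (ωm + ωm') (ωp + ωp') := by
  refine ⟨fun x y z => ⟨?_, ?_, ?_⟩, fun x y z => ⟨?_, ?_, ?_⟩⟩ <;>
    simp only [LinearMap.add_apply]
  · rw [(h.1 x y z).1, (h'.1 x y z).1, KP.tm_add₁]
  · rw [(h.1 x y z).2.1, (h'.1 x y z).2.1, KP.tm_add₂]
  · rw [(h.1 x y z).2.2, (h'.1 x y z).2.2, KP.tm_add₃]
  · rw [(h.2 x y z).1, (h'.2 x y z).1, KP.tp_add₁]
  · rw [(h.2 x y z).2.1, (h'.2 x y z).2.1, KP.tp_add₂]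
  · rw [(h.2 x y z).2.2, (h'.2 x y z).2.2, KP.tp_add₃]

theorem smul (h : KP.InCentroid ωm ωp) (a : K) : KP.InCentroid (a • ωm) (a • ωp) := by
  refine ⟨fun x y z => ⟨?_, ?_, ?_⟩, fun x y z => ⟨?_, ?_, ?_⟩⟩ <;>
    simp only [LinearMap.smul_apply]
  · rw [(h.1 x y z).1, KP.tm_smul₁]
  · rw [(h.1 x y z).2.1, KP.tm_smul₂]
  · rw [(h.1 x y z).2.2, KP.tm_smul₃]
  · rw [(h.2 x y z).1, KP.tp_smul₁]
  · rw [(h.2 x y z).2.1, KP.tp_smul₂]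
  · rw [(h.2 x y z).2.2, KP.tp_smul₃]

theorem comp (h : KP.InCentroid ωm ωp) (h' : KP.InCentroid ωm' ωp') :
    KP.InCentroid (ωm ∘ₗ ωm') (ωp ∘ₗ ωp') := by
  refine ⟨fun x y z => ⟨?_, ?_, ?_⟩, fun x y z => ⟨?_, ?_, ?_⟩⟩ <;>
    simp only [LinearMap.comp_apply]
  · rw [(h'.1 x y z).1, (h.1 _ y z).1]
  · rw [(h'.1 x y z).2.1, (h.1 x _ z).2.1]
  · rw [(h'.1 x y z).2.2, (h.1 x y _).2.2]
  · rw [(h'.2 x y z).1, (h.2 _ y z).1]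
  · rw [(h'.2 x y z).2.1, (h.2 x _ z).2.1]
  · rw [(h'.2 x y z).2.2, (h.2 x y _).2.2]

theorem comp_comm (hspan : KP.spanTm = ⊤ ∧ KP.spanTp = ⊤)
    (h : KP.InCentroid ωm ωp) (h' : KP.InCentroid ωm' ωp') :
    ωm ∘ₗ ωm' = ωm' ∘ₗ ωm ∧ ωp ∘ₗ ωp' = ωp' ∘ₗ ωp := by
  constructor
  · refine LinearMap.ext_on hspan.1 ?_
    rintro _ ⟨x, y, z, rfl⟩
    simp only [LinearMap.comp_apply]
    rw [(h'.1 x y z).1, (h.1 _ y z).2.2, (h.1 x y z).2.2, (h'.1 x y _).1]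
  · refine LinearMap.ext_on hspan.2 ?_
    rintro _ ⟨x, y, z, rfl⟩
    simp only [LinearMap.comp_apply]
    rw [(h'.2 x y z).1, (h.2 _ y z).2.2, (h.2 x y z).2.2, (h'.2 x y _).1]

theorem isIdealPair_ker (h : KP.InCentroid ωm ωp) :
    KP.IsIdealPair (LinearMap.ker ωm) (LinearMap.ker ωp) := by
  refine ⟨fun x z y q hq => ⟨?_, ?_⟩, fun x z r hr => ?_,
    fun x z y q hq => ⟨?_, ?_⟩, fun x z r hr => ?_⟩
  · rw [LinearMap.mem_ker, (h.1 x y q).2.2, LinearMap.mem_ker.mp hq, tm_zero₃]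
  · rw [LinearMap.mem_ker, (h.1 q y z).1, LinearMap.mem_ker.mp hq, tm_zero₁]
  · rw [LinearMap.mem_ker, (h.1 x r z).2.1, LinearMap.mem_ker.mp hr, tm_zero₂]
  · rw [LinearMap.mem_ker, (h.2 x y q).2.2, LinearMap.mem_ker.mp hq, tp_zero₃]
  · rw [LinearMap.mem_ker, (h.2 q y z).1, LinearMap.mem_ker.mp hq, tp_zero₁]
  · rw [LinearMap.mem_ker, (h.2 x r z).2.1, LinearMap.mem_ker.mp hr, tp_zero₂]

theorem isIdealPair_range (h : KP.InCentroid ωm ωp) :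
    KP.IsIdealPair (LinearMap.range ωm) (LinearMap.range ωp) := by
  refine ⟨fun x z y _ hq => ⟨?_, ?_⟩, fun x z _ hr => ?_,
    fun x z y _ hq => ⟨?_, ?_⟩, fun x z _ hr => ?_⟩
  · obtain ⟨q, rfl⟩ := hq; exact ⟨_, (h.1 x y q).2.2⟩
  · obtain ⟨q, rfl⟩ := hq; exact ⟨_, (h.1 q y z).1⟩
  · obtain ⟨r, rfl⟩ := hr; exact ⟨_, (h.1 x r z).2.1⟩
  · obtain ⟨q, rfl⟩ := hq; exact ⟨_, (h.2 x y q).2.2⟩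
  · obtain ⟨q, rfl⟩ := hq; exact ⟨_, (h.2 q y z).1⟩
  · obtain ⟨r, rfl⟩ := hr; exact ⟨_, (h.2 x r z).2.1⟩

theorem linearEquiv_symm {em : Pm ≃ₗ[K] Pm} {ep : Pp ≃ₗ[K] Pp}
    (h : KP.InCentroid em.toLinearMap ep.toLinearMap) :
    KP.InCentroid em.symm.toLinearMap ep.symm.toLinearMap := by
  refine ⟨fun x y z => ⟨em.injective ?_, em.injective ?_, em.injective ?_⟩,
    fun x y z => ⟨ep.injective ?_, ep.injective ?_, ep.injective ?_⟩⟩ <;>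
    simp only [LinearEquiv.coe_coe, LinearEquiv.apply_symm_apply]
  · rw [← LinearEquiv.coe_coe, (h.1 _ y z).1, LinearEquiv.coe_coe, em.apply_symm_apply]
  · rw [← LinearEquiv.coe_coe, (h.1 x _ z).2.1, LinearEquiv.coe_coe, ep.apply_symm_apply]
  · rw [← LinearEquiv.coe_coe, (h.1 x y _).2.2, LinearEquiv.coe_coe, em.apply_symm_apply]
  · rw [← LinearEquiv.coe_coe, (h.2 _ y z).1, LinearEquiv.coe_coe, ep.apply_symm_apply]
  · rw [← LinearEquiv.coe_coe, (h.2 x _ z).2.1, LinearEquiv.coe_coe, em.apply_symm_apply]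
  · rw [← LinearEquiv.coe_coe, (h.2 x y _).2.2, LinearEquiv.coe_coe, ep.apply_symm_apply]

end InCentroid

theorem IsSimplePair.bijective_of_inCentroid (hKP : KP.IsSimplePair)
    {ωm : Pm →ₗ[K] Pm} {ωp : Pp →ₗ[K] Pp} (h : KP.InCentroid ωm ωp) (hne : ¬(ωm = 0 ∧ ωp = 0)) :
    Function.Bijective ωm ∧ Function.Bijective ωp := by
  obtain ⟨hkm, hkp⟩ : LinearMap.ker ωm = ⊥ ∧ LinearMap.ker ωp = ⊥ :=
    (hKP.2 _ _ h.isIdealPair_ker).resolve_right fun hk =>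
      hne ⟨LinearMap.ker_eq_top.mp hk.1, LinearMap.ker_eq_top.mp hk.2⟩
  obtain ⟨hrm, hrp⟩ : LinearMap.range ωm = ⊤ ∧ LinearMap.range ωp = ⊤ :=
    (hKP.2 _ _ h.isIdealPair_range).resolve_left fun hr =>
      hne ⟨LinearMap.range_eq_bot.mp hr.1, LinearMap.range_eq_bot.mp hr.2⟩
  exact ⟨⟨LinearMap.ker_eq_bot.mp hkm, LinearMap.range_eq_top.mp hrm⟩,
    ⟨LinearMap.ker_eq_bot.mp hkp, LinearMap.range_eq_top.mp hrp⟩⟩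

theorem IsSimplePair.exists_inverse_of_inCentroid (hKP : KP.IsSimplePair)
    {ωm : Pm →ₗ[K] Pm} {ωp : Pp →ₗ[K] Pp} (h : KP.InCentroid ωm ωp) (hne : ¬(ωm = 0 ∧ ωp = 0)) :
    ∃ ωm' ωp', KP.InCentroid ωm' ωp' ∧
      ωm ∘ₗ ωm' = LinearMap.id ∧ ωm' ∘ₗ ωm = LinearMap.id ∧
      ωp ∘ₗ ωp' = LinearMap.id ∧ ωp' ∘ₗ ωp = LinearMap.id := by
  obtain ⟨hbm, hbp⟩ := hKP.bijective_of_inCentroid h hne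
  let em := LinearEquiv.ofBijective ωm hbm
  let ep := LinearEquiv.ofBijective ωp hbp
  exact ⟨em.symm, ep.symm, InCentroid.linearEquiv_symm (em := em) (ep := ep) h,
    em.comp_symm, em.symm_comp, ep.comp_symm, ep.symm_comp⟩

end KantorPair

theorem statement4_general {K : Type*} [CommRing K]
    {Pm Pp : Type*} [AddCommGroup Pm] [AddCommGroup Pp] [Module K Pm] [Module K Pp]
    (KP : KantorPair K Pm Pp) (hsimple : KP.IsSimplePair) :
    -- C(P) is a commutative unital subring of End(P⁻) ⊕ End(P⁺) ...
    KP.InCentroid LinearMap.id LinearMap.id ∧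
    (∀ ωm ωp ωm' ωp', KP.InCentroid ωm ωp → KP.InCentroid ωm' ωp' →
      KP.InCentroid (ωm + ωm') (ωp + ωp') ∧
      KP.InCentroid (ωm ∘ₗ ωm') (ωp ∘ₗ ωp') ∧
      ωm ∘ₗ ωm' = ωm' ∘ₗ ωm ∧ ωp ∘ₗ ωp' = ωp' ∘ₗ ωp) ∧
    (∀ (a : K) ωm ωp, KP.InCentroid ωm ωp → KP.InCentroid (a • ωm) (a • ωp)) ∧
    -- ... which is a field: 1 ≠ 0 and every nonzero element has an inverse in C(P)
    ¬((LinearMap.id : Pm →ₗ[K] Pm) = 0 ∧ (LinearMap.id : Pp →ₗ[K] Pp) = 0) ∧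
    (∀ ωm ωp, KP.InCentroid ωm ωp → ¬(ωm = 0 ∧ ωp = 0) →
      ∃ ωm' ωp', KP.InCentroid ωm' ωp' ∧
        ωm ∘ₗ ωm' = LinearMap.id ∧ ωm' ∘ₗ ωm = LinearMap.id ∧
        ωp ∘ₗ ωp' = LinearMap.id ∧ ωp' ∘ₗ ωp = LinearMap.id) ∧
    -- P is simple over C(P): every ideal of P which is stable under the centroid
    -- (i.e. every C(P)-submodule ideal) is trivial, and some product is nonzero
    ((∃ x y z, KP.tm x y z ≠ 0) ∨ (∃ x y z, KP.tp x y z ≠ 0)) ∧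
    (∀ (Qm : Submodule K Pm) (Qp : Submodule K Pp), KP.IsIdealPair Qm Qp →
      (∀ ωm ωp, KP.InCentroid ωm ωp →
        (∀ q ∈ Qm, ωm q ∈ Qm) ∧ (∀ q ∈ Qp, ωp q ∈ Qp)) →
      (Qm = ⊥ ∧ Qp = ⊥) ∨ (Qm = ⊤ ∧ Qp = ⊤)) ∧
    -- P is central over C(P): every element of the centroid of P regarded over C(P)
    -- (i.e. commuting with the C(P)-action) lies in C(P) (is a C(P)-scalar),
    -- and the map C(P) → C_{C(P)}(P) is injective
    (∀ ωm ωp, KP.InCentroid ωm ωp →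
      (∀ cm cp, KP.InCentroid cm cp → ωm ∘ₗ cm = cm ∘ₗ ωm ∧ ωp ∘ₗ cp = cp ∘ₗ ωp) →
      ∃ cm cp, KP.InCentroid cm cp ∧ ωm = cm ∧ ωp = cp) := by
  have hspan := hsimple.spanTm_eq_top_and_spanTp_eq_top
  exact ⟨KantorPair.inCentroid_id,
    fun _ _ _ _ h h' => ⟨h.add h', h.comp h', h.comp_comm hspan h'⟩,
    fun a _ _ h => h.smul a,
    hsimple.id_ne_zero,
    fun _ _ h hne => hsimple.exists_inverse_of_inCentroid h hne,
    hsimple.1,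
    fun Qm Qp hQ _ => hsimple.2 Qm Qp hQ,
    fun ωm ωp h _ => ⟨ωm, ωp, h, rfl, rfl⟩⟩

/-- If `P` is a simple Kantor pair over `K`, then the centroid `C(P)` is a
field (a commutative subring of `End(P⁻) ⊕ End(P⁺)` with `1 ≠ 0` in which every nonzero
element is invertible), and `P`, viewed as a pair of `C(P)`-modules via the centroid
action with the same products, is a central simple Kantor pair over the field `C(P)`
(simplicity is expressed via ideals stable under the centroid action, i.e.
`C(P)`-submodule ideals; centrality over `C(P)` by the `C(P)`-centroid being `C(P)`). -/
theorem statement4 {K : Type*} [CommRing K] (h6 : IsUnit (6 : K))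
    {Pm Pp : Type*} [AddCommGroup Pm] [AddCommGroup Pp] [Module K Pm] [Module K Pp]
    (KP : KantorPair K Pm Pp) (hsimple : KP.IsSimplePair) :
    -- C(P) is a commutative unital subring of End(P⁻) ⊕ End(P⁺) ...
    KP.InCentroid LinearMap.id LinearMap.id ∧
    (∀ ωm ωp ωm' ωp', KP.InCentroid ωm ωp → KP.InCentroid ωm' ωp' →
      KP.InCentroid (ωm + ωm') (ωp + ωp') ∧
      KP.InCentroid (ωm ∘ₗ ωm') (ωp ∘ₗ ωp') ∧
      ωm ∘ₗ ωm' = ωm' ∘ₗ ωm ∧ ωp ∘ₗ ωp' = ωp' ∘ₗ ωp) ∧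
    (∀ (a : K) ωm ωp, KP.InCentroid ωm ωp → KP.InCentroid (a • ωm) (a • ωp)) ∧
    -- ... which is a field: 1 ≠ 0 and every nonzero element has an inverse in C(P)
    ¬((LinearMap.id : Pm →ₗ[K] Pm) = 0 ∧ (LinearMap.id : Pp →ₗ[K] Pp) = 0) ∧
    (∀ ωm ωp, KP.InCentroid ωm ωp → ¬(ωm = 0 ∧ ωp = 0) →
      ∃ ωm' ωp', KP.InCentroid ωm' ωp' ∧
        ωm ∘ₗ ωm' = LinearMap.id ∧ ωm' ∘ₗ ωm = LinearMap.id ∧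
        ωp ∘ₗ ωp' = LinearMap.id ∧ ωp' ∘ₗ ωp = LinearMap.id) ∧
    -- P is simple over C(P): every ideal of P which is stable under the centroid
    -- (i.e. every C(P)-submodule ideal) is trivial, and some product is nonzero
    ((∃ x y z, KP.tm x y z ≠ 0) ∨ (∃ x y z, KP.tp x y z ≠ 0)) ∧
    (∀ (Qm : Submodule K Pm) (Qp : Submodule K Pp), KP.IsIdealPair Qm Qp →
      (∀ ωm ωp, KP.InCentroid ωm ωp →
        (∀ q ∈ Qm, ωm q ∈ Qm) ∧ (∀ q ∈ Qp, ωp q ∈ Qp)) →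
      (Qm = ⊥ ∧ Qp = ⊥) ∨ (Qm = ⊤ ∧ Qp = ⊤)) ∧
    -- P is central over C(P): every element of the centroid of P regarded over C(P)
    -- (i.e. commuting with the C(P)-action) lies in C(P) (is a C(P)-scalar),
    -- and the map C(P) → C_{C(P)}(P) is injective
    (∀ ωm ωp, KP.InCentroid ωm ωp →
      (∀ cm cp, KP.InCentroid cm cp → ωm ∘ₗ cm = cm ∘ₗ ωm ∧ ωp ∘ₗ cp = cp ∘ₗ ωp) →
      ∃ cm cp, KP.InCentroid cm cp ∧ ωm = cm ∧ ωp = cp) :=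
  statement4_general KP hsimple
end

section
/- Suppose L is a Lie algebra over 𝕂 that is finitely generated as a 𝕂-module, and 𝔽 is a flat unital commutative associative 𝕂-algebra. Then the canonical map Z(L)_𝔽 → L_𝔽 (induced by inclusion, where X_𝔽 = 𝔽 ⊗_𝕂 X) is injective with image Z(L_𝔽), giving an isomorphism of 𝔽-Lie algebras Z(L)_𝔽 ≅ Z(L_𝔽); and the canonical map L_𝔽 → (L/Z(L))_𝔽 induces an isomorphism of 𝔽-Lie algebras L_𝔽/Z(L_𝔽) ≅ (L/Z(L))_𝔽. -/
/-!
Pick generators `x₁, …, xₙ` of the `K`-module `L`. The centre of `L` is the kernel of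
`m ↦ (⁅xᵢ, m⁆)ᵢ : L → Lⁿ`, and since the `1 ⊗ xᵢ` generate `L_F` over `F`, the centre of
`L_F` is the kernel of the base change of this map. Flat base change commutes with kernels, so
`Z(L)_F = Z(L_F)`; applied to the quotient map `L → L/Z(L)` the same fact identifies the kernel
of `L_F → (L/Z(L))_F`.
-/

open TensorProduct LieModule

theorem Module.Flat.ker_baseChange {K F M N : Type*} [CommRing K] [CommRing F] [Algebra K F]
    [Module.Flat K F] [AddCommGroup M] [Module K M] [AddCommGroup N] [Module K N]
    (f : M →ₗ[K] N) :
    LinearMap.ker (f.baseChange F) = (LinearMap.ker f).baseChange F :=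
  Module.Flat.ker_lTensor_eq F F f

theorem TensorProduct.piRight_baseChange_pi {K F M ι : Type*} [CommRing K] [CommRing F]
    [Algebra K F] [AddCommGroup M] [Module K M] [Fintype ι] [DecidableEq ι]
    {N : ι → Type*} [∀ i, AddCommGroup (N i)] [∀ i, Module K (N i)]
    (f : ∀ i, M →ₗ[K] N i) (x : F ⊗[K] M) (i : ι) :
    piRight K F F N ((LinearMap.pi f).baseChange F x) i = (f i).baseChange F x := by
  induction x using TensorProduct.induction_on with
  | zero => simp
  | tmul a m => simp
  | add x y hx hy => simp only [map_add, Pi.add_apply, hx, hy]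

theorem Submodule.span_one_tmul_eq_top {K F M : Type*} [CommRing K] [CommRing F] [Algebra K F]
    [AddCommGroup M] [Module K M] {s : Set M} (hs : span K s = ⊤) :
    span F (TensorProduct.mk K F M 1 '' s) = ⊤ := by
  rw [← Submodule.baseChange_top, ← hs, Submodule.baseChange_span]

section

variable {K L M : Type*} [CommRing K] [LieRing L] [LieAlgebra K L]
  [AddCommGroup M] [Module K M] [LieRingModule L M] [LieModule K L M]

theorem LieModule.mem_maxTrivSubmodule_iff_of_span_eq_top {s : Set L}
    (hs : Submodule.span K s = ⊤) {m : M} :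
    m ∈ maxTrivSubmodule K L M ↔ ∀ x ∈ s, ⁅x, m⁆ = 0 := by
  refine (mem_maxTrivSubmodule K L M m).trans ⟨fun h x _ ↦ h x, fun h x ↦ ?_⟩
  have hm : (toEnd K L M : L →ₗ[K] Module.End K M).flip m = 0 := LinearMap.ext_on hs h
  exact LinearMap.congr_fun hm x

variable (F : Type*) [CommRing F] [Algebra K F]

theorem LieModule.baseChange_maxTrivSubmodule [Module.Finite K L] [Module.Flat K F] :
    (maxTrivSubmodule K L M).baseChange F = maxTrivSubmodule F (F ⊗[K] L) (F ⊗[K] M) := by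
  obtain ⟨n, v, hv⟩ := Module.Finite.exists_fin (R := K) (M := L)
  set φ : M →ₗ[K] Fin n → M := LinearMap.pi fun i ↦ toEnd K L M (v i)
  have hφ : LinearMap.ker φ = maxTrivSubmodule K L M := by
    ext m
    simp [φ, mem_maxTrivSubmodule_iff_of_span_eq_top hv, funext_iff]
  have hvF := Submodule.span_one_tmul_eq_top (F := F) hv
  have hφF : LinearMap.ker (φ.baseChange F) = maxTrivSubmodule F (F ⊗[K] L) (F ⊗[K] M) := by
    ext m
    rw [LieSubmodule.mem_toSubmodule, mem_maxTrivSubmodule_iff_of_span_eq_top hvF,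
      LinearMap.mem_ker, ← (piRight K F F fun _ ↦ M).map_eq_zero_iff, funext_iff]
    simp [φ, piRight_baseChange_pi, ← toEnd_baseChange]
  rw [← LieSubmodule.toSubmodule_inj, LieSubmodule.coe_baseChange, ← hφ, ← hφF,
    Module.Flat.ker_baseChange]

theorem LieAlgebra.baseChange_center [Module.Finite K L] [Module.Flat K F] :
    (center K L).baseChange F = center F (F ⊗[K] L) :=
  baseChange_maxTrivSubmodule F

end

theorem LinearMap.baseChange_lie {K F L L' : Type*} [CommRing K] [CommRing F] [Algebra K F]
    [LieRing L] [LieAlgebra K L] [LieRing L'] [LieAlgebra K L'] (f : L →ₗ[K] L')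
    (hf : ∀ a b, f ⁅a, b⁆ = ⁅f a, f b⁆) (x y : F ⊗[K] L) :
    f.baseChange F ⁅x, y⁆ = ⁅f.baseChange F x, f.baseChange F y⁆ :=
  (LieAlgebra.ExtendScalars.map (AlgHom.id K F) { f with map_lie' := hf _ _ }).map_lie x y

/-- Let `L` be a Lie algebra over `K` that is finitely generated as a
`K`-module and let `F` be a flat commutative `K`-algebra.  Then the canonical map
`Z(L)_F → L_F` is injective with image `Z(L_F)` (so `Z(L)_F ≅ Z(L_F)`), and the canonical
map `L_F → (L/Z(L))_F` is a surjective Lie algebra map with kernel `Z(L_F)`, inducing an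
isomorphism of `F`-Lie algebras `L_F / Z(L_F) ≅ (L/Z(L))_F`. -/
theorem statement9 {K : Type*} [CommRing K] {L : Type*} [LieRing L] [LieAlgebra K L]
    [Module.Finite K L] (F : Type*) [CommRing F] [Algebra K F] [Module.Flat K F] :
    -- the canonical map Z(L)_F → L_F is injective ...
    Function.Injective
      (LinearMap.baseChange F ((LieAlgebra.center K L).toSubmodule.subtype)) ∧
    -- ... with image the center of L_F, so Z(L)_F ≅ Z(L_F)
    LinearMap.range
        (LinearMap.baseChange F ((LieAlgebra.center K L).toSubmodule.subtype))
      = (LieAlgebra.center F (F ⊗[K] L)).toSubmodule ∧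
    -- the canonical map L_F → (L/Z(L))_F is surjective, ...
    Function.Surjective
      (LinearMap.baseChange F
        (LieSubmodule.Quotient.mk' (LieAlgebra.center K L)).toLinearMap) ∧
    -- ... has kernel Z(L_F), ...
    LinearMap.ker
        (LinearMap.baseChange F
          (LieSubmodule.Quotient.mk' (LieAlgebra.center K L)).toLinearMap)
      = (LieAlgebra.center F (F ⊗[K] L)).toSubmodule ∧
    -- ... and is a morphism of F-Lie algebras, hence induces an isomorphism of
    -- F-Lie algebras L_F / Z(L_F) ≅ (L / Z(L))_F
    (∀ x y : F ⊗[K] L,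
      (LinearMap.baseChange F
        (LieSubmodule.Quotient.mk' (LieAlgebra.center K L)).toLinearMap) ⁅x, y⁆
      = ⁅(LinearMap.baseChange F
            (LieSubmodule.Quotient.mk' (LieAlgebra.center K L)).toLinearMap) x,
          (LinearMap.baseChange F
            (LieSubmodule.Quotient.mk' (LieAlgebra.center K L)).toLinearMap) y⁆) := by
  have hrange :=
    congrArg LieSubmodule.toSubmodule (LieAlgebra.baseChange_center (K := K) (L := L) F)
  refine ⟨Module.Flat.lTensor_preserves_injective_linearMap _ (Submodule.injective_subtype _),
    hrange, LinearMap.lTensor_surjective F (LieSubmodule.Quotient.surjective_mk' _), ?_,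
    LinearMap.baseChange_lie _ fun _ _ ↦ LieSubmodule.Quotient.mk_bracket _ _ _⟩
  rw [Module.Flat.ker_baseChange]
  exact (congrArg _ (Submodule.ker_mkQ _)).trans hrange
end
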